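/- arXiv:1501.05083 — 4 statements merged into one kernel-verified Lean document; each statement's English description precedes it below -/
import Mathlib

section
/- Let I be an ideal of ℂ[x_1,...,x_n], ξ ∈ ℂ^n, and Q the m_ξ-primary component of I (where m_ξ is the maximal ideal of polynomials vanishing at ξ). Then the orthogonal complement Q^⊥ of Q in the dual space equals the intersection of I^⊥ with the space of polynomial differential operators at ξ (i.e., finite ℂ-linear combinations of operators ∂^β_ξ : p ↦ ∂^β(p)(ξ)). -/
/-!
A functional lies in `ℂ[∂_ξ]` exactly when it kills some power `m_ξ^N`. One way, a derivative
of order `|β|` maps `m_ξ^(1 + |β|)` into `m_ξ`. The other way, Taylor expansion at `ξ` (the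
coefficient expansion at `0`, translated) shows that the common kernel of the finitely many
`∂^β_ξ` with all `β_i < N` lies in `m_ξ^N`, so a functional killing `m_ξ^N` is in their span.

Since `√Q = m_ξ` is finitely generated, `m_ξ^N ⊆ Q` for some `N`, which gives
`Q^⊥ ⊆ I^⊥ ∩ ℂ[∂_ξ]`. Conversely, if `q ∈ Q` then `pq ∈ I` for some `p` with `p(ξ) ≠ 0`;
such a `p` is invertible modulo every `m_ξ^N`, so `Q ⊆ I + m_ξ^N`, and a functional killing
`I` and `m_ξ^N` kills `Q`.
-/

open MvPolynomial

/-- Iterated partial derivative `∂^β` on multivariate polynomials. -/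
noncomputable def pd {n : ℕ} {K : Type*} [CommSemiring K] (β : Fin n → ℕ) :
    Module.End K (MvPolynomial (Fin n) K) :=
  (List.ofFn fun i : Fin n =>
    ((MvPolynomial.pderiv i).toLinearMap : Module.End K (MvPolynomial (Fin n) K)) ^ (β i)).prod

/-- The linear functional `∂^β_ξ : p ↦ ∂^β(p)(ξ)`. -/
noncomputable def diffAt {n : ℕ} (ξ : Fin n → ℂ) (β : Fin n → ℕ) :
    Module.Dual ℂ (MvPolynomial (Fin n) ℂ) :=
  (MvPolynomial.aeval ξ).toLinearMap.comp (pd β)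

/-- The space `ℂ[∂_ξ]` of polynomial differential operators at `ξ`:
finite `ℂ`-linear combinations of the functionals `∂^β_ξ`. -/
noncomputable def polyDiffOps {n : ℕ} (ξ : Fin n → ℂ) :
    Submodule ℂ (Module.Dual ℂ (MvPolynomial (Fin n) ℂ)) :=
  Submodule.span ℂ (Set.range fun β : Fin n → ℕ => diffAt ξ β)

/-- The orthogonal complement `J^⊥ = {Λ : Λ(p) = 0 ∀ p ∈ J}` of an ideal in the dual space. -/
noncomputable def perp {n : ℕ} (J : Ideal (MvPolynomial (Fin n) ℂ)) :
    Submodule ℂ (Module.Dual ℂ (MvPolynomial (Fin n) ℂ)) :=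
  (J.restrictScalars ℂ).dualAnnihilator

section PowersOfIdeal

variable {R A : Type*} [CommSemiring R] [CommSemiring A] [Algebra R A] (J : Ideal A)

theorem Derivation.apply_mem_pow (D : Derivation R A A) {k : ℕ} {x : A}
    (hx : x ∈ J ^ (k + 1)) : D x ∈ J ^ k := by
  induction k generalizing x with
  | zero => simp
  | succ k ih =>
    rw [pow_succ'] at hx ⊢
    refine Submodule.mul_induction_on hx (fun a ha b hb => ?_) (fun x y hx hy => ?_)
    · rw [D.leibniz, smul_eq_mul, smul_eq_mul]
      exact add_mem (Ideal.mul_mem_mul ha (ih hb)) (Ideal.mul_mem_right _ _ (pow_succ' J k ▸ hb))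
    · rw [map_add]
      exact add_mem hx hy

theorem Module.End.pow_apply_mem_pow {f : Module.End R A}
    (hf : ∀ k x, x ∈ J ^ (k + 1) → f x ∈ J ^ k) (b : ℕ) {k : ℕ} {x : A} (hx : x ∈ J ^ (k + b)) :
    (f ^ b) x ∈ J ^ k := by
  induction b generalizing x with
  | zero => simpa using hx
  | succ b ih =>
    rw [pow_succ, Module.End.mul_apply]
    exact ih (hf _ _ hx)

theorem List.prod_ofFn_apply_mem_pow {m : ℕ} (f : Fin m → Module.End R A) (w : Fin m → ℕ)
    (hf : ∀ j k x, x ∈ J ^ (k + w j) → f j x ∈ J ^ k) {k : ℕ} {x : A}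
    (hx : x ∈ J ^ (k + ∑ j, w j)) : (List.ofFn f).prod x ∈ J ^ k := by
  induction m generalizing k with
  | zero => simpa using hx
  | succ m ih =>
    rw [List.ofFn_succ, List.prod_cons, Module.End.mul_apply]
    refine hf 0 k _ (ih _ _ (fun j => hf j.succ) ?_)
    rwa [Fin.sum_univ_succ, ← add_assoc] at hx

end PowersOfIdeal

theorem pd_apply_mem_pow {n : ℕ} {K : Type*} [CommSemiring K]
    (J : Ideal (MvPolynomial (Fin n) K)) (β : Fin n → ℕ) {k : ℕ} {p : MvPolynomial (Fin n) K}
    (hp : p ∈ J ^ (k + ∑ i, β i)) : pd β p ∈ J ^ k :=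
  List.prod_ofFn_apply_mem_pow J _ β
    (fun i _ _ => Module.End.pow_apply_mem_pow J (fun _ _ => (pderiv i).apply_mem_pow J) (β i)) hp

theorem diffAt_eq_zero_of_mem_pow {n : ℕ} {ξ : Fin n → ℂ} {β : Fin n → ℕ}
    {p : MvPolynomial (Fin n) ℂ} (hp : p ∈ RingHom.ker (eval ξ) ^ (1 + ∑ i, β i)) :
    diffAt ξ β p = 0 := by
  have := pd_apply_mem_pow _ β hp
  rwa [pow_one, RingHom.mem_ker] at this

section Translate

variable {σ K : Type*} [CommRing K]

noncomputable def translateBy (ξ : σ → K) : MvPolynomial σ K →ₐ[K] MvPolynomial σ K :=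
  aeval fun j => X j - C (ξ j)

@[simp]
theorem translateBy_X (ξ : σ → K) (j : σ) : translateBy ξ (X j) = X j - C (ξ j) := by
  simp [translateBy]

theorem eval_translateBy (ξ : σ → K) (p : MvPolynomial σ K) :
    eval ξ (translateBy ξ p) = eval 0 p := by
  induction p using MvPolynomial.induction_on with
  | C a => simp [translateBy]
  | add p q hp hq => simp [hp, hq]
  | mul_X p j hp => simp [hp]

theorem translateBy_surjective (ξ : σ → K) : Function.Surjective (translateBy ξ) := by
  have : (translateBy ξ).comp (translateBy (-ξ)) = AlgHom.id K _ := by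
    ext j
    simp
  exact fun p => ⟨translateBy (-ξ) p, congrArg (· p) this⟩

theorem map_translateBy_ker_eval_zero_le (ξ : σ → K) :
    (RingHom.ker (eval (0 : σ → K))).map (translateBy ξ) ≤ RingHom.ker (eval ξ) := by
  rw [Ideal.map_le_iff_le_comap]
  intro p hp
  rw [Ideal.mem_comap, RingHom.mem_ker, eval_translateBy]
  exact hp

theorem pderiv_translateBy (ξ : σ → K) (i : σ) (p : MvPolynomial σ K) :
    pderiv i (translateBy ξ p) = translateBy ξ (pderiv i p) := by
  induction p using MvPolynomial.induction_on with
  | C a => simp [translateBy]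
  | add p q hp hq => simp [hp, hq]
  | mul_X p j hp =>
    classical
    simp only [map_mul, pderiv_mul, hp, translateBy_X, map_sub, pderiv_C, sub_zero, map_add,
      pderiv_X]
    rcases eq_or_ne i j with rfl | hne <;> simp [*]

end Translate

theorem pd_translateBy {n : ℕ} {K : Type*} [CommRing K] (ξ : Fin n → K) (β : Fin n → ℕ)
    (p : MvPolynomial (Fin n) K) : pd β (translateBy ξ p) = translateBy ξ (pd β p) := by
  have hcomm : Commute (pd β) (translateBy ξ).toLinearMap := by
    refine Commute.list_prod_left _ _ fun D hD => ?_
    obtain ⟨i, rfl⟩ := List.mem_ofFn.mp hD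
    exact Commute.pow_left (LinearMap.ext (pderiv_translateBy ξ i)) _
  exact LinearMap.congr_fun hcomm p

theorem diffAt_translateBy {n : ℕ} (ξ : Fin n → ℂ) (β : Fin n → ℕ)
    (p : MvPolynomial (Fin n) ℂ) : diffAt ξ β (translateBy ξ p) = diffAt 0 β p := by
  simp only [diffAt, LinearMap.comp_apply, AlgHom.toLinearMap_apply, pd_translateBy]
  exact eval_translateBy ξ (pd β p)

section Monomial

variable {σ K : Type*} [CommSemiring K]

theorem pderiv_pow_monomial (i : σ) (b : ℕ) (s : σ →₀ ℕ) (a : K) :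
    ((pderiv i).toLinearMap ^ b : Module.End K (MvPolynomial σ K)) (monomial s a)
      = monomial (s - Finsupp.single i b) (a * (s i).descFactorial b) := by
  induction b generalizing s a with
  | zero => simp
  | succ b ih =>
    rw [pow_succ, Module.End.mul_apply, Derivation.coeFn_coe, pderiv_monomial, ih, tsub_tsub,
      ← Finsupp.single_add, add_comm 1 b, Finsupp.tsub_apply, Finsupp.single_eq_same, mul_assoc]
    congr 2
    cases s i with
    | zero => simp
    | succ m => rw [Nat.succ_descFactorial_succ, Nat.add_sub_cancel]; push_cast; ring

theorem prod_ofFn_pderiv_pow_monomial {m : ℕ} (f : Fin m → σ) (hf : Function.Injective f)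
    (β : σ → ℕ) (s : σ →₀ ℕ) (a : K) :
    (List.ofFn fun j => ((pderiv (f j)).toLinearMap ^ β (f j) :
        Module.End K (MvPolynomial σ K))).prod (monomial s a)
      = monomial (s - ∑ j, Finsupp.single (f j) (β (f j)))
          (a * ∏ j, ((s (f j)).descFactorial (β (f j)) : K)) := by
  induction m generalizing s a with
  | zero => simp
  | succ m ih =>
    have hT : (∑ j : Fin m, Finsupp.single (f j.succ) (β (f j.succ))) (f 0) = 0 := by
      rw [Finsupp.finsetSum_apply]
      exact Finset.sum_eq_zero fun j _ =>
        Finsupp.single_eq_of_ne (fun h => Fin.succ_ne_zero j (hf h.symm))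
    rw [List.ofFn_succ, List.prod_cons, Module.End.mul_apply,
      ih (fun j => f j.succ) (hf.comp (Fin.succ_injective m)), pderiv_pow_monomial,
      Fin.sum_univ_succ, Fin.prod_univ_succ, tsub_tsub, add_comm, Finsupp.tsub_apply, hT,
      Nat.sub_zero, mul_assoc, mul_comm (∏ _, _)]

theorem pd_monomial {n : ℕ} (b s : Fin n →₀ ℕ) (a : K) :
    pd b (monomial s a) = monomial (s - b) (a * ∏ i, ((s i).descFactorial (b i) : K)) := by
  simpa [pd, Finsupp.univ_sum_single] using
    prod_ofFn_pderiv_pow_monomial (K := K) id Function.injective_id b s a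

end Monomial

theorem diffAt_zero_monomial {n : ℕ} (b s : Fin n →₀ ℕ) (a : ℂ) :
    diffAt 0 b (monomial s a) = if s = b then a * ∏ i, ((b i).factorial : ℂ) else 0 := by
  rw [diffAt, LinearMap.comp_apply, pd_monomial, AlgHom.toLinearMap_apply, aeval_zero,
    constantCoeff_monomial, Algebra.algebraMap_self, RingHom.id_apply]
  split_ifs with hsub hsb hsb
  · subst hsb
    simp [Nat.descFactorial_self]
  · obtain ⟨i, hi⟩ : ∃ i, s i < b i := by
      by_contra! h
      exact hsb (le_antisymm (tsub_eq_zero_iff_le.mp hsub) (Finsupp.le_def.mpr h))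
    exact mul_eq_zero_of_right _ (Finset.prod_eq_zero (Finset.mem_univ i)
      (by exact_mod_cast Nat.descFactorial_eq_zero_iff_lt.mpr hi))
  · simp [hsb] at hsub
  · rfl

theorem diffAt_zero_apply {n : ℕ} (b : Fin n →₀ ℕ) (p : MvPolynomial (Fin n) ℂ) :
    diffAt 0 b p = coeff b p * ∏ i, ((b i).factorial : ℂ) := by
  induction p using MvPolynomial.induction_on' with
  | monomial s a => rw [diffAt_zero_monomial, coeff_monomial, ite_mul, zero_mul]
  | add p q hp hq => rw [map_add, hp, hq, coeff_add, add_mul]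

section Taylor

variable {σ K : Type*} [CommSemiring K]

theorem monomial_mem_pow_ker_eval_zero {s : σ →₀ ℕ} {i : σ} {N : ℕ} (hi : N ≤ s i) (a : K) :
    monomial s a ∈ RingHom.ker (eval (0 : σ → K)) ^ N := by
  have hX : (X i : MvPolynomial σ K) ∈ RingHom.ker (eval 0) := by simp
  rw [← Finsupp.single_add_erase i s, ← one_mul a, ← monomial_mul, ← X_pow_eq_monomial]
  exact Ideal.mul_mem_right _ _ (Ideal.pow_le_pow_right hi (Ideal.pow_mem_pow hX _))

theorem mem_pow_ker_eval_zero_of_coeff_eq_zero {p : MvPolynomial σ K} {N : ℕ}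
    (h : ∀ b : σ →₀ ℕ, (∀ i, b i < N) → coeff b p = 0) :
    p ∈ RingHom.ker (eval (0 : σ → K)) ^ N := by
  rw [p.as_sum]
  refine Ideal.sum_mem _ fun s hs => ?_
  obtain ⟨i, hi⟩ : ∃ i, N ≤ s i := by
    by_contra! hlt
    exact mem_support_iff.mp hs (h s hlt)
  exact monomial_mem_pow_ker_eval_zero hi _

end Taylor

theorem mem_pow_ker_eval_of_diffAt_eq_zero {n : ℕ} {ξ : Fin n → ℂ}
    {p : MvPolynomial (Fin n) ℂ} {N : ℕ} (h : ∀ b : Fin n →₀ ℕ, (∀ i, b i < N) → diffAt ξ b p = 0) :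
    p ∈ RingHom.ker (eval ξ) ^ N := by
  obtain ⟨r, rfl⟩ := translateBy_surjective ξ p
  have hr : r ∈ RingHom.ker (eval 0) ^ N := by
    refine mem_pow_ker_eval_zero_of_coeff_eq_zero fun b hb => ?_
    have hfact : ∏ i, ((b i).factorial : ℂ) ≠ 0 :=
      Finset.prod_ne_zero_iff.mpr fun i _ => Nat.cast_ne_zero.mpr (b i).factorial_ne_zero
    simpa [diffAt_translateBy, diffAt_zero_apply, hfact] using h b hb
  have := Ideal.mem_map_of_mem (translateBy ξ) hr
  rw [Ideal.map_pow] at this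
  exact Ideal.pow_right_mono (map_translateBy_ker_eval_zero_le ξ) N this

theorem mem_perp {n : ℕ} {J : Ideal (MvPolynomial (Fin n) ℂ)}
    {Λ : Module.Dual ℂ (MvPolynomial (Fin n) ℂ)} : Λ ∈ perp J ↔ ∀ p ∈ J, Λ p = 0 :=
  Submodule.mem_dualAnnihilator Λ

theorem perp_anti {n : ℕ} {J J' : Ideal (MvPolynomial (Fin n) ℂ)} (h : J ≤ J') :
    perp J' ≤ perp J :=
  Submodule.dualAnnihilator_anti h

theorem perp_sup {n : ℕ} (J J' : Ideal (MvPolynomial (Fin n) ℂ)) :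
    perp (J ⊔ J') = perp J ⊓ perp J' := by
  rw [perp, Submodule.restrictScalars_sup, Submodule.dualAnnihilator_sup_eq]
  rfl

theorem mem_polyDiffOps_iff {n : ℕ} {ξ : Fin n → ℂ}
    {Λ : Module.Dual ℂ (MvPolynomial (Fin n) ℂ)} :
    Λ ∈ polyDiffOps ξ ↔ ∃ N, Λ ∈ perp (RingHom.ker (eval ξ) ^ N) := by
  constructor
  · intro hΛ
    induction hΛ using Submodule.span_induction with
    | mem _ hΛ =>
      obtain ⟨β, rfl⟩ := hΛ
      exact ⟨1 + ∑ i, β i, mem_perp.mpr fun p hp => diffAt_eq_zero_of_mem_pow hp⟩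
    | zero => exact ⟨0, zero_mem _⟩
    | add _ _ _ _ h₁ h₂ =>
      obtain ⟨N₁, h₁⟩ := h₁
      obtain ⟨N₂, h₂⟩ := h₂
      exact ⟨max N₁ N₂, add_mem
        (perp_anti (Ideal.pow_le_pow_right (le_max_left N₁ N₂)) h₁)
        (perp_anti (Ideal.pow_le_pow_right (le_max_right N₁ N₂)) h₂)⟩
    | smul c _ _ h =>
      obtain ⟨N, h⟩ := h
      exact ⟨N, Submodule.smul_mem _ c h⟩
  · rintro ⟨N, hΛ⟩
    let L : (Fin n → Fin N) → Module.Dual ℂ (MvPolynomial (Fin n) ℂ) :=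
      fun b => diffAt ξ fun i => b i
    refine Submodule.span_mono ?_ (mem_span_of_iInf_ker_le_ker (L := L) fun p hp => ?_)
    · rintro _ ⟨b, rfl⟩
      exact ⟨_, rfl⟩
    · exact mem_perp.mp hΛ p (mem_pow_ker_eval_of_diffAt_eq_zero fun b hb =>
        (Submodule.mem_iInf _).mp hp fun i => ⟨b i, hb i⟩)

theorem Ideal.mem_sup_pow_of_mul_mem {R : Type*} [CommRing R] {I M : Ideal R} {p q : R}
    (hp : 1 - p ∈ M) (hpq : p * q ∈ I) (N : ℕ) : q ∈ I ⊔ M ^ N := by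
  -- `∑ j < N, (1 - p) ^ j` inverts `p` modulo `M ^ N`.
  have hq : q = (∑ j ∈ Finset.range N, (1 - p) ^ j) * (p * q) + (1 - p) ^ N * q := by
    linear_combination (-q) * geom_sum_mul_neg (1 - p) N
  rw [hq]
  exact Submodule.add_mem_sup (I.mul_mem_left _ hpq)
    ((M ^ N).mul_mem_right _ (Ideal.pow_mem_pow hp N))

theorem le_sup_pow_ker_eval {σ K : Type*} [Field K] {ξ : σ → K}
    {I Q : Ideal (MvPolynomial σ K)}
    (hQ : ∀ q ∈ Q, ∃ p, eval ξ p ≠ 0 ∧ p * q ∈ I) (N : ℕ) :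
    Q ≤ I ⊔ RingHom.ker (eval ξ) ^ N := by
  intro q hq
  obtain ⟨p, hp, hpq⟩ := hQ q hq
  refine Ideal.mem_sup_pow_of_mul_mem (p := C (eval ξ p)⁻¹ * p) ?_ ?_ N
  · simp [hp]
  · rw [mul_assoc]
    exact I.mul_mem_left _ hpq

theorem perp_primary_component_general {n : ℕ} (ξ : Fin n → ℂ)
    (I Q : Ideal (MvPolynomial (Fin n) ℂ))
    (hrad : Q.radical = RingHom.ker (MvPolynomial.eval ξ))
    (hQ : ∀ q, q ∈ Q ↔ ∃ p, MvPolynomial.eval ξ p ≠ 0 ∧ p * q ∈ I) :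
    perp Q = perp I ⊓ polyDiffOps ξ := by
  have hIQ : I ≤ Q := fun q hq => (hQ q).mpr ⟨1, by simp, by simpa using hq⟩
  obtain ⟨N, hN⟩ := Ideal.exists_radical_pow_le_of_fg Q (IsNoetherian.noetherian _)
  rw [hrad] at hN
  apply le_antisymm
  · exact fun Λ hΛ => ⟨perp_anti hIQ hΛ, mem_polyDiffOps_iff.mpr ⟨N, perp_anti hN hΛ⟩⟩
  · rintro Λ ⟨hI, hD⟩
    obtain ⟨M, hM⟩ := mem_polyDiffOps_iff.mp hD
    refine perp_anti (le_sup_pow_ker_eval (fun q hq => (hQ q).mp hq) M) ?_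
    rw [perp_sup]
    exact ⟨hI, hM⟩

/-- If `Q` is the `m_ξ`-primary component of `I`, then `Q^⊥ = I^⊥ ∩ ℂ[∂_ξ]`. -/
theorem perp_primary_component {n : ℕ} (ξ : Fin n → ℂ)
    (I Q : Ideal (MvPolynomial (Fin n) ℂ))
    (hprim : Q.IsPrimary)
    (hrad : Q.radical = RingHom.ker (MvPolynomial.eval ξ))
    (hQ : ∀ q, q ∈ Q ↔ ∃ p, MvPolynomial.eval ξ p ≠ 0 ∧ p * q ∈ I) :
    perp Q = perp I ⊓ polyDiffOps ξ :=
  perp_primary_component_general ξ I Q hrad hQ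
end

section
/- Let Q be an m_ξ-primary ideal of ℂ[x_1,...,x_n] with multiplicity δ = dim ℂ[x]/Q. Then there exists a set E = {α_1,...,α_δ} ⊂ ℕ^n of exponents, connected to 1 and with α_1 = 0, such that B = {(x−ξ)^{α_1},...,(x−ξ)^{α_δ}} is a basis of ℂ[x]/Q, and there exists a unique dual basis Λ_0,...,Λ_{δ−1} of Q^⊥ with Λ_j = (1/α_{j+1}!)∂^{α_{j+1}}_ξ + Σ_{|β|≤o, β∉E} ν_{α_{j+1},β} ∂^β_ξ, orthogonal to B in the sense that Λ_i((x−ξ)^{α_{j+1}}) = δ_{ij}. -/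
/-!
Order the exponents lexicographically and keep those `γ` whose class of `(x−ξ)^γ` in `ℂ[x]/Q` is
not a combination of the classes of lex-smaller shifted monomials. These classes form a basis of
`ℂ[x]/Q`, because shifted monomials span `ℂ[x]` and `m_ξ^{o+1} ⊆ Q` kills those of degree `> o`.
Since the lexicographic order is compatible with addition, multiplying a dependency by `x_i − ξ_i`
shows that the kept set is closed under taking divisors, hence connected to `1`; its lex-least
element is `0`.

The dual basis of `(ℂ[x]/Q)^* ≅ Q^⊥`, pulled back to `ℂ[x]`, is the unique family in `Q^⊥`
orthogonal to `B`, and it spans `Q^⊥`. Its shape is Taylor expansion at `ξ`: as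
`∂^β_ξ (x−ξ)^γ = γ! δ_{βγ}`, a functional vanishing on `m_ξ^{o+1}` equals
`Σ_{|β|≤o} Λ((x−ξ)^β)/β! ∂^β_ξ`, and for `Λ_j` the coefficients at the exponents `α_k` are `δ_{jk}`.
-/

open MvPolynomial

/-- The shifted monomial `(x−ξ)^α`. -/
noncomputable def xm {n : ℕ} (ξ : Fin n → ℂ) (α : Fin n → ℕ) : MvPolynomial (Fin n) ℂ :=
  ∏ i, (X i - C (ξ i)) ^ (α i)

section GreedyIndices

open Submodule

variable (K : Type*) {V ι : Type*} [DivisionRing K] [AddCommGroup V] [Module K V] [LinearOrder ι]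
  (v : ι → V)

def greedyIndices : Set ι := {i | v i ∉ span K (v '' Set.Iio i)}

variable {K v}

theorem linearIndepOn_greedyIndices : LinearIndepOn K v (greedyIndices K v) := by
  classical
  suffices h : ∀ s : Finset ι, ↑s ⊆ greedyIndices K v → LinearIndepOn K v s from
    linearIndepOn_of_finite _ fun t ht htfin => htfin.coe_toFinset ▸ h _ (by simpa using ht)
  intro s
  induction s using Finset.induction_on_max with
  | empty => simp
  | insert i s hlt ih =>
    rw [Finset.coe_insert, Set.insert_subset_iff]
    rintro ⟨hi, hs⟩
    exact (ih hs).insert fun hmem => hi (span_mono (Set.image_mono hlt) hmem)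

theorem span_image_greedyIndices [WellFoundedLT ι] :
    span K (v '' greedyIndices K v) = span K (Set.range v) := by
  refine le_antisymm (span_mono (Set.image_subset_range _ _)) (span_le.mpr ?_)
  rintro _ ⟨i, rfl⟩
  induction i using WellFoundedLT.induction with
  | _ i ih =>
    by_cases hi : i ∈ greedyIndices K v
    · exact subset_span (Set.mem_image_of_mem v hi)
    · refine span_le.mpr ?_ (not_not.mp hi)
      rintro _ ⟨j, hj, rfl⟩
      exact ih j hj

theorem ne_zero_of_mem_greedyIndices {i : ι} (hi : i ∈ greedyIndices K v) : v i ≠ 0 :=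
  fun h => hi (h ▸ zero_mem _)

theorem greedyIndices_subset {s : Set ι} (h : ∀ i ∉ s, v i = 0) : greedyIndices K v ⊆ s :=
  fun i hi => by_contra fun his => ne_zero_of_mem_greedyIndices hi (h i his)

theorem mem_greedyIndices_of_isMin {i : ι} (hmin : IsMin i) (hi : v i ≠ 0) :
    i ∈ greedyIndices K v := by
  simpa [greedyIndices, Set.Iio_eq_empty_iff.mpr hmin] using hi

theorem mem_greedyIndices_of_apply_mem {f : ι → ι} (hf : StrictMono f) (φ : V →ₗ[K] V)
    (hφ : ∀ i, φ (v i) = v (f i)) {i : ι} (hfi : f i ∈ greedyIndices K v) :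
    i ∈ greedyIndices K v := by
  intro hi
  refine hfi ?_
  have := mem_map_of_mem (f := φ) hi
  rw [map_span, ← Set.image_comp, hφ] at this
  refine span_mono ?_ this
  rintro _ ⟨j, hj, rfl⟩
  exact ⟨f j, hf hj, (hφ j).symm⟩

end GreedyIndices

section DualOfQuotient

open LinearMap Module

variable {K M V ι : Type*} [Field K] [AddCommGroup M] [Module K M] [AddCommGroup V] [Module K V]
  (π : M →ₗ[K] V) (b : Basis ι K V)

theorem Module.Basis.coord_comp_mem_dualAnnihilator_ker (j : ι) :
    (b.coord j).comp π ∈ (ker π).dualAnnihilator := by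
  rw [← range_dualMap_eq_dualAnnihilator_ker]
  exact ⟨b.coord j, rfl⟩

theorem Module.Basis.span_coord_comp [Finite ι] :
    Submodule.span K (Set.range fun j => (b.coord j).comp π) = (ker π).dualAnnihilator := by
  classical
  rw [← range_dualMap_eq_dualAnnihilator_ker, range_eq_map, ← b.dualBasis.span_eq,
    Submodule.map_span, ← Set.range_comp, b.coe_dualBasis]
  rfl

theorem Module.Basis.eq_of_mem_dualAnnihilator_ker {f : ι → M} (hf : ∀ k, π (f k) = b k)
    {Λ₁ Λ₂ : Dual K M} (h₁ : Λ₁ ∈ (ker π).dualAnnihilator) (h₂ : Λ₂ ∈ (ker π).dualAnnihilator)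
    (h : ∀ k, Λ₁ (f k) = Λ₂ (f k)) : Λ₁ = Λ₂ := by
  rw [← range_dualMap_eq_dualAnnihilator_ker] at h₁ h₂
  obtain ⟨φ₁, rfl⟩ := h₁
  obtain ⟨φ₂, rfl⟩ := h₂
  congr 1
  exact b.ext fun k => by simpa [hf] using h k

end DualOfQuotient

variable {n : ℕ}

section ShiftedMonomials

variable (ξ : Fin n → ℂ)

theorem xm_zero : xm ξ 0 = 1 := by simp [xm]

theorem xm_add (γ μ : Fin n → ℕ) : xm ξ (γ + μ) = xm ξ γ * xm ξ μ := by
  simp [xm, pow_add, Finset.prod_mul_distrib]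

theorem xm_single_one (i : Fin n) : xm ξ (Pi.single i 1) = X i - C (ξ i) := by
  rw [xm, Finset.prod_eq_single i (fun j _ hj => by rw [Pi.single_eq_of_ne hj, pow_zero])
    (by simp)]
  simp

theorem aeval_xm (μ : Fin n → ℕ) : aeval ξ (xm ξ μ) = if μ = 0 then 1 else 0 := by
  split_ifs with h
  · simp [h, xm_zero]
  · obtain ⟨i, hi⟩ := Function.ne_iff.mp h
    rw [xm, map_prod]
    exact Finset.prod_eq_zero (Finset.mem_univ i) (by simpa using hi)

theorem pderiv_xm (γ : Fin n → ℕ) (i : Fin n) :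
    pderiv i (xm ξ γ) = (γ i : ℂ) • xm ξ (γ - Pi.single i 1) := by
  have split (μ : Fin n → ℕ) : xm ξ μ =
      (X i - C (ξ i)) ^ μ i * ∏ j ∈ Finset.univ.erase i, (X j - C (ξ j)) ^ μ j :=
    (Finset.mul_prod_erase _ _ (Finset.mem_univ i)).symm
  have rest_eq : ∏ j ∈ Finset.univ.erase i, (X j - C (ξ j)) ^ (γ - Pi.single i 1 : Fin n → ℕ) j =
      ∏ j ∈ Finset.univ.erase i, (X j - C (ξ j)) ^ γ j :=
    Finset.prod_congr rfl fun j hj => by simp [Finset.ne_of_mem_erase hj]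
  have rest_const : pderiv i (∏ j ∈ Finset.univ.erase i, (X j - C (ξ j)) ^ γ j) = 0 := by
    refine Finset.prod_induction _ (fun p => pderiv i p = 0) (fun p q hp hq => ?_) (by simp)
      fun j hj => ?_
    · simp [hp, hq]
    · simp [Derivation.leibniz_pow, pderiv_X, Pi.single_eq_of_ne (Finset.ne_of_mem_erase hj)]
  rw [split, split, rest_eq, Derivation.leibniz, rest_const, Derivation.leibniz_pow]
  simp [mul_comm, Nat.cast_smul_eq_nsmul, nsmul_eq_mul, mul_assoc]

theorem pow_pderiv_xm (γ : Fin n → ℕ) (i : Fin n) (b : ℕ) :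
    (((pderiv i).toLinearMap : Module.End ℂ (MvPolynomial (Fin n) ℂ)) ^ b) (xm ξ γ)
      = ((γ i).descFactorial b : ℂ) • xm ξ (γ - Pi.single i b) := by
  induction b with
  | zero => simp
  | succ b ih =>
    rw [pow_succ', Module.End.mul_apply, ih, map_smul, Derivation.coeFn_coe,
      pderiv_xm]
    rw [smul_smul, tsub_tsub, ← Pi.single_add, Nat.descFactorial_succ, Nat.cast_mul, mul_comm]
    congr 2
    simp

theorem list_prod_pow_pderiv_xm (β γ : Fin n → ℕ) {l : List (Fin n)} (hl : l.Nodup) :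
    (l.map fun i => ((pderiv i).toLinearMap : Module.End ℂ (MvPolynomial (Fin n) ℂ)) ^ β i).prod
        (xm ξ γ)
      = (∏ i ∈ l.toFinset, ((γ i).descFactorial (β i) : ℂ)) •
          xm ξ (γ - ∑ i ∈ l.toFinset, Pi.single i (β i)) := by
  induction l with
  | nil => simp
  | cons i l ih =>
    obtain ⟨hi, hl⟩ := List.nodup_cons.mp hl
    have hi' : i ∉ l.toFinset := by simpa using hi
    have untouched : (γ - ∑ j ∈ l.toFinset, Pi.single j (β j)) i = γ i := by
      simp [Finset.sum_apply, Pi.single_apply, hi']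
    rw [List.map_cons, List.prod_cons, Module.End.mul_apply, ih hl, map_smul, pow_pderiv_xm,
      untouched, smul_smul, tsub_tsub, List.toFinset_cons, Finset.prod_insert hi',
      Finset.sum_insert hi', add_comm _ (∑ j ∈ l.toFinset, _), mul_comm]

theorem pd_xm (β γ : Fin n → ℕ) :
    pd β (xm ξ γ) = (∏ i, ((γ i).descFactorial (β i) : ℂ)) • xm ξ (γ - β) := by
  rw [pd, List.ofFn_eq_map, list_prod_pow_pderiv_xm ξ β γ (List.nodup_finRange n),
    List.toFinset_finRange, Finset.univ_sum_single]

theorem diffAt_xm (β γ : Fin n → ℕ) :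
    diffAt ξ β (xm ξ γ) = if β = γ then ∏ i, ((γ i).factorial : ℂ) else 0 := by
  change aeval ξ (pd β (xm ξ γ)) = _
  rw [pd_xm, map_smul, aeval_xm, smul_eq_mul]
  split_ifs with hγβ hβγ hβγ
  · simp [hβγ, Nat.descFactorial_self]
  · obtain ⟨i, hi⟩ : ∃ i, γ i < β i := by
      by_contra! h
      exact hβγ (le_antisymm h (tsub_eq_zero_iff_le.mp hγβ))
    rw [Finset.prod_eq_zero (Finset.mem_univ i) (by simpa [Nat.descFactorial_eq_zero_iff_lt]),
      zero_mul]
  · simp [hβγ] at hγβ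
  · rw [mul_zero]

end ShiftedMonomials

section Expansion

open Submodule

variable (ξ : Fin n → ℂ)

theorem xm_mem_pow_ker (γ : Fin n → ℕ) :
    xm ξ γ ∈ RingHom.ker (MvPolynomial.eval ξ) ^ ∑ i, γ i := by
  rw [← Finset.prod_pow_eq_pow_sum]
  exact Ideal.prod_mem_prod fun i _ => Ideal.pow_mem_pow (by simp [RingHom.mem_ker]) _

theorem xm_mem_of_pow_ker_le {Q : Ideal (MvPolynomial (Fin n) ℂ)} {o : ℕ}
    (ho : RingHom.ker (MvPolynomial.eval ξ) ^ (o + 1) ≤ Q) {γ : Fin n → ℕ} (hγ : o < ∑ i, γ i) :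
    xm ξ γ ∈ Q :=
  ho (Ideal.pow_le_pow_right hγ (xm_mem_pow_ker ξ γ))

theorem span_range_xm : span ℂ (Set.range (xm ξ)) = ⊤ := by
  rw [eq_top_iff]
  rintro p -
  induction p using MvPolynomial.induction_on with
  | C a =>
    have := smul_mem (span ℂ (Set.range (xm ξ))) a (subset_span (Set.mem_range_self 0))
    rwa [xm_zero, smul_eq_C_mul, mul_one] at this
  | add p q hp hq => exact add_mem hp hq
  | mul_X p i hp =>
    have mul_shift : ∀ q ∈ span ℂ (Set.range (xm ξ)),
        q * (X i - C (ξ i)) ∈ span ℂ (Set.range (xm ξ)) := by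
      intro q hq
      induction hq using span_induction with
      | mem _ h =>
        obtain ⟨γ, rfl⟩ := h
        exact subset_span ⟨γ + Pi.single i 1, by rw [xm_add, xm_single_one]⟩
      | zero => simp
      | add _ _ _ _ hx hy => rw [add_mul]; exact add_mem hx hy
      | smul c _ _ hx => rw [smul_mul_assoc]; exact smul_mem _ c hx
    have : p * X i = p * (X i - C (ξ i)) + ξ i • p := by rw [smul_eq_C_mul]; ring
    rw [this]
    exact add_mem (mul_shift p hp) (smul_mem _ _ hp)

theorem eq_sum_diffAt_of_mem_perp {Q : Ideal (MvPolynomial (Fin n) ℂ)} {S : Finset (Fin n → ℕ)}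
    (hS : ∀ γ ∉ S, xm ξ γ ∈ Q) {Λ : Module.Dual ℂ (MvPolynomial (Fin n) ℂ)} (hΛ : Λ ∈ perp Q) :
    Λ = ∑ β ∈ S, (Λ (xm ξ β) * (∏ i, ((β i).factorial : ℂ))⁻¹) • diffAt ξ β := by
  refine LinearMap.ext_on (span_range_xm ξ) ?_
  rintro _ ⟨γ, rfl⟩
  simp only [LinearMap.sum_apply, LinearMap.smul_apply, diffAt_xm, smul_eq_mul,
    mul_ite, mul_zero, Finset.sum_ite_eq']
  split_ifs with hγ
  · rw [inv_mul_cancel_right₀ (by simp [Finset.prod_ne_zero_iff, Nat.factorial_ne_zero])]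
  · exact (Submodule.mem_dualAnnihilator Λ).mp hΛ _ (hS γ hγ)

def exponentsDegLE (n o : ℕ) : Finset (Fin n → ℕ) :=
  (Fintype.piFinset fun _ => Finset.range (o + 1)).filter fun β => ∑ i, β i ≤ o

theorem mem_exponentsDegLE {o : ℕ} {β : Fin n → ℕ} : β ∈ exponentsDegLE n o ↔ ∑ i, β i ≤ o := by
  refine ⟨fun h => (Finset.mem_filter.mp h).2, fun h => Finset.mem_filter.mpr ⟨?_, h⟩⟩
  exact Fintype.mem_piFinset.mpr fun i =>
    Finset.mem_range_succ_iff.mpr ((Finset.single_le_sum (by simp) (Finset.mem_univ i)).trans h)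

theorem sub_smul_diffAt_mem_span {Q : Ideal (MvPolynomial (Fin n) ℂ)} {o : ℕ}
    (ho : RingHom.ker (MvPolynomial.eval ξ) ^ (o + 1) ≤ Q) {ι : Type*} [DecidableEq ι]
    (α : ι → (Fin n → ℕ)) (j : ι) {Λ : Module.Dual ℂ (MvPolynomial (Fin n) ℂ)}
    (hΛ : Λ ∈ perp Q) (hΛα : ∀ k, Λ (xm ξ (α k)) = if j = k then 1 else 0)
    (hαj : ∑ i, α j i ≤ o) :
    Λ - (∏ i, ((α j i).factorial : ℂ))⁻¹ • diffAt ξ (α j) ∈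
      span ℂ {L | ∃ β : Fin n → ℕ, β ∉ Set.range α ∧ (∑ i, β i) ≤ o ∧ L = diffAt ξ β} := by
  have expansion := eq_sum_diffAt_of_mem_perp ξ (S := exponentsDegLE n o)
    (fun γ hγ => xm_mem_of_pow_ker_le ξ ho (by simpa [mem_exponentsDegLE] using hγ)) hΛ
  have hsplit : Λ - (∏ i, ((α j i).factorial : ℂ))⁻¹ • diffAt ξ (α j) =
      ∑ β ∈ (exponentsDegLE n o).erase (α j),
        (Λ (xm ξ β) * (∏ i, ((β i).factorial : ℂ))⁻¹) • diffAt ξ β := by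
    rw [Finset.sum_erase_eq_sub (mem_exponentsDegLE.mpr hαj), ← expansion, hΛα, if_pos rfl,
      one_mul]
  rw [hsplit]
  refine sum_mem fun β hβ => ?_
  obtain ⟨hβj, hβo⟩ := Finset.mem_erase.mp hβ
  by_cases hβα : β ∈ Set.range α
  · obtain ⟨k, rfl⟩ := hβα
    rw [hΛα, if_neg (by rintro rfl; exact hβj rfl), zero_mul, zero_smul]
    exact zero_mem _
  · exact smul_mem _ _ (subset_span ⟨β, hβα, mem_exponentsDegLE.mp hβo, rfl⟩)

end Expansion

section StandardExponents

open Submodule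

variable (ξ : Fin n → ℂ) (Q : Ideal (MvPolynomial (Fin n) ℂ))

def standardExponents : Set (Lex (Fin n → ℕ)) :=
  greedyIndices ℂ fun γ => Ideal.Quotient.mk Q (xm ξ (ofLex γ))

variable {ξ Q}

theorem standardExponents_subset {o : ℕ}
    (ho : RingHom.ker (MvPolynomial.eval ξ) ^ (o + 1) ≤ Q) :
    standardExponents ξ Q ⊆ ofLex ⁻¹' ↑(exponentsDegLE n o) :=
  greedyIndices_subset fun γ hγ => Ideal.Quotient.eq_zero_iff_mem.mpr
    (xm_mem_of_pow_ker_le ξ ho (by simpa [mem_exponentsDegLE] using hγ))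

theorem span_image_standardExponents :
    span ℂ ((fun γ => Ideal.Quotient.mk Q (xm ξ (ofLex γ))) '' standardExponents ξ Q) = ⊤ := by
  have hrange : Set.range (fun γ : Lex (Fin n → ℕ) => Ideal.Quotient.mk Q (xm ξ (ofLex γ))) =
      (Ideal.Quotient.mkₐ ℂ Q).toLinearMap '' Set.range (xm ξ) := by
    rw [← Set.range_comp, ← ofLex.surjective.range_comp]
    rfl
  rw [standardExponents, span_image_greedyIndices, hrange, span_image, span_range_xm,
    Submodule.map_top, LinearMap.range_eq_top]
  exact Ideal.Quotient.mkₐ_surjective ℂ Q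

theorem toLex_zero_mem_standardExponents (hE : (standardExponents ξ Q).Nonempty) :
    toLex 0 ∈ standardExponents ξ Q := by
  obtain ⟨γ, hγ⟩ := hE
  have : Nontrivial (MvPolynomial (Fin n) ℂ ⧸ Q) :=
    nontrivial_of_ne _ 0 (ne_zero_of_mem_greedyIndices hγ)
  refine mem_greedyIndices_of_isMin (fun β _ => Pi.toLex_monotone (zero_le : 0 ≤ ofLex β)) ?_
  simp [xm_zero]

theorem mem_standardExponents_of_add_single {γ : Fin n → ℕ} (i : Fin n)
    (h : toLex (γ + Pi.single i 1) ∈ standardExponents ξ Q) :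
    toLex γ ∈ standardExponents ξ Q := by
  have hmono : StrictMono (· + toLex (Pi.single i 1 : Fin n → ℕ)) :=
    fun _ _ h => add_lt_add_left h _
  have hmul : ∀ β : Lex (Fin n → ℕ),
      LinearMap.mulRight ℂ (Ideal.Quotient.mk Q (X i - C (ξ i)))
          (Ideal.Quotient.mk Q (xm ξ (ofLex β))) =
        Ideal.Quotient.mk Q (xm ξ (ofLex (β + toLex (Pi.single i 1)))) := by
    intro β
    rw [LinearMap.mulRight_apply, ← map_mul, ← xm_single_one, ← xm_add]
    rfl
  exact mem_greedyIndices_of_apply_mem hmono _ hmul h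

theorem exists_pred_mem_standardExponents {γ : Fin n → ℕ} (hγ : toLex γ ∈ standardExponents ξ Q)
    (hγ0 : γ ≠ 0) : ∃ β ∈ standardExponents ξ Q, ∃ i, γ = ofLex β + Pi.single i 1 := by
  obtain ⟨i, hi⟩ := Function.ne_iff.mp hγ0
  have hsplit : γ - Pi.single i 1 + Pi.single i 1 = γ := tsub_add_cancel_of_le fun j => by
    by_cases hj : j = i
    · subst hj; simpa [Nat.one_le_iff_ne_zero] using hi
    · simp [hj]
  refine ⟨toLex (γ - Pi.single i 1), mem_standardExponents_of_add_single i ?_, i, hsplit.symm⟩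
  rwa [hsplit]

end StandardExponents

open Module in
theorem exists_connected_basis_xm {ξ : Fin n → ℂ} {Q : Ideal (MvPolynomial (Fin n) ℂ)} {o : ℕ}
    (ho : RingHom.ker (MvPolynomial.eval ξ) ^ (o + 1) ≤ Q) :
    ∃ (α : Fin (finrank ℂ (MvPolynomial (Fin n) ℂ ⧸ Q)) → (Fin n → ℕ))
      (b : Basis (Fin (finrank ℂ (MvPolynomial (Fin n) ℂ ⧸ Q))) ℂ (MvPolynomial (Fin n) ℂ ⧸ Q)),
      Function.Injective α ∧ (∀ h, α ⟨0, h⟩ = 0) ∧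
      (∀ k, α k ≠ 0 → ∃ l i, α k = α l + Pi.single i 1) ∧
      (∀ k, b k = Ideal.Quotient.mk Q (xm ξ (α k))) ∧ ∀ k, ∑ i, α k i ≤ o := by
  set E := standardExponents ξ Q
  have hfin : E.Finite := ((exponentsDegLE n o).finite_toSet.preimage
    ofLex.injective.injOn).subset (standardExponents_subset ho)
  have := hfin.fintype
  have hspan := span_image_standardExponents (ξ := ξ) (Q := Q)
  rw [Set.image_eq_range] at hspan
  let bE : Basis E ℂ (MvPolynomial (Fin n) ℂ ⧸ Q) :=
    Basis.mk linearIndepOn_greedyIndices hspan.ge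
  let e := Fintype.orderIsoFinOfCardEq E (finrank_eq_card_basis bE).symm
  refine ⟨fun k => ofLex (e k : Lex (Fin n → ℕ)), bE.reindex e.symm.toEquiv,
    fun k l h => e.injective (Subtype.ext (ofLex.injective h)), fun h => ?_, fun k hk => ?_,
    fun k => by rw [Basis.reindex_apply]; exact Basis.mk_apply _ _ _,
    fun k => mem_exponentsDegLE.mp (standardExponents_subset ho (e k).2)⟩
  · have h0 : toLex 0 ∈ E := toLex_zero_mem_standardExponents ⟨_, (e ⟨0, h⟩).2⟩
    have hle : e ⟨0, h⟩ ≤ e (e.symm ⟨toLex 0, h0⟩) := e.monotone (Nat.zero_le _)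
    rw [e.apply_symm_apply, ← Subtype.coe_le_coe] at hle
    exact congrArg ofLex (le_antisymm hle (Pi.toLex_monotone fun _ => Nat.zero_le _))
  · obtain ⟨β, hβ, i, hβi⟩ :=
      exists_pred_mem_standardExponents (γ := ofLex (e k : Lex (Fin n → ℕ))) (e k).2 hk
    exact ⟨e.symm ⟨β, hβ⟩, i, by simpa using hβi⟩

theorem exists_orthogonal_primal_dual_pair_general {n : ℕ} (ξ : Fin n → ℂ)
    (Q : Ideal (MvPolynomial (Fin n) ℂ))
    (δ : ℕ) (hδ : δ = Module.finrank ℂ (MvPolynomial (Fin n) ℂ ⧸ Q))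
    (o : ℕ) (ho : (RingHom.ker (MvPolynomial.eval ξ)) ^ (o + 1) ≤ Q) :
    ∃ α : Fin δ → (Fin n → ℕ),
      Function.Injective α ∧
      (∀ h : 0 < δ, α ⟨0, h⟩ = 0) ∧
      -- E is connected to 1
      (∀ k, α k ≠ 0 → ∃ l i, α k = α l + Pi.single i 1) ∧
      -- B is a basis of ℂ[x]/Q
      LinearIndependent ℂ (fun k => Ideal.Quotient.mk Q (xm ξ (α k))) ∧
      Submodule.span ℂ (Set.range fun k => Ideal.Quotient.mk Q (xm ξ (α k))) = ⊤ ∧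
      -- unique orthogonal dual basis of the prescribed form
      (∃! Λ : Fin δ → Module.Dual ℂ (MvPolynomial (Fin n) ℂ),
        (∀ j, Λ j ∈ perp Q) ∧
        (∀ j k, Λ j (xm ξ (α k)) = if j = k then 1 else 0) ∧
        Submodule.span ℂ (Set.range Λ) = perp Q ∧
        (∀ j, Λ j - (∏ i, ((α j i).factorial : ℂ))⁻¹ • diffAt ξ (α j) ∈
          Submodule.span ℂ
            {L | ∃ β : Fin n → ℕ, β ∉ Set.range α ∧ (∑ i, β i) ≤ o ∧ L = diffAt ξ β})) := by
  subst hδ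
  obtain ⟨α, b, hinj, hzero, hconn, hb, hdeg⟩ := exists_connected_basis_xm ho
  set π := (Ideal.Quotient.mkₐ ℂ Q).toLinearMap
  have hperp : perp Q = (LinearMap.ker π).dualAnnihilator := by
    rw [perp]
    congr 1
    ext p
    simp [π, Ideal.Quotient.eq_zero_iff_mem]
  have hπ : ∀ k, π (xm ξ (α k)) = b k := fun k => (hb k).symm
  have hmem : ∀ j, (b.coord j).comp π ∈ perp Q :=
    hperp ▸ b.coord_comp_mem_dualAnnihilator_ker π
  have horth : ∀ j k, (b.coord j).comp π (xm ξ (α k)) = if j = k then 1 else 0 := by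
    intro j k
    simp [hπ, Finsupp.single_apply, eq_comm]
  have hb' : ⇑b = fun k => Ideal.Quotient.mk Q (xm ξ (α k)) := funext hb
  refine ⟨α, hinj, hzero, hconn, hb' ▸ b.linearIndependent, hb' ▸ b.span_eq,
    fun j => (b.coord j).comp π, ⟨hmem, horth, hperp ▸ b.span_coord_comp π,
      fun j => sub_smul_diffAt_mem_span ξ ho α j (hmem j) (horth j) (hdeg j)⟩, ?_⟩
  rintro Λ ⟨hΛ, hΛα, -, -⟩
  funext j
  rw [hperp] at hΛ hmem
  exact b.eq_of_mem_dualAnnihilator_ker π hπ (hΛ j) (hmem j) fun k => by rw [hΛα, horth]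

/-- Existence of an orthogonal primal-dual pair for an `m_ξ`-primary ideal `Q` of
multiplicity `δ` and nil-index `o`: a set of exponents `E = {α_1,…,α_δ}` connected to `1`
with `α_1 = 0` such that `B = {(x−ξ)^{α_k}}` is a basis of `ℂ[x]/Q`, together with a
unique dual basis `Λ_0,…,Λ_{δ−1}` of `Q^⊥` with
`Λ_j = (1/α_{j+1}!)∂^{α_{j+1}}_ξ + Σ_{|β|≤o, β∉E} ν_{α_{j+1},β} ∂^β_ξ`
and `Λ_i((x−ξ)^{α_{j+1}}) = δ_{ij}`. -/
theorem exists_orthogonal_primal_dual_pair {n : ℕ} (ξ : Fin n → ℂ)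
    (Q : Ideal (MvPolynomial (Fin n) ℂ))
    (hprim : Q.IsPrimary)
    (hrad : Q.radical = RingHom.ker (MvPolynomial.eval ξ))
    (δ : ℕ) (hδ : δ = Module.finrank ℂ (MvPolynomial (Fin n) ℂ ⧸ Q))
    (o : ℕ) (ho : (RingHom.ker (MvPolynomial.eval ξ)) ^ (o + 1) ≤ Q)
    (homin : ∀ t, (RingHom.ker (MvPolynomial.eval ξ)) ^ (t + 1) ≤ Q → o ≤ t) :
    ∃ α : Fin δ → (Fin n → ℕ),
      Function.Injective α ∧
      (∀ h : 0 < δ, α ⟨0, h⟩ = 0) ∧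
      -- E is connected to 1
      (∀ k, α k ≠ 0 → ∃ l i, α k = α l + Pi.single i 1) ∧
      -- B is a basis of ℂ[x]/Q
      LinearIndependent ℂ (fun k => Ideal.Quotient.mk Q (xm ξ (α k))) ∧
      Submodule.span ℂ (Set.range fun k => Ideal.Quotient.mk Q (xm ξ (α k))) = ⊤ ∧
      -- unique orthogonal dual basis of the prescribed form
      (∃! Λ : Fin δ → Module.Dual ℂ (MvPolynomial (Fin n) ℂ),
        (∀ j, Λ j ∈ perp Q) ∧
        (∀ j k, Λ j (xm ξ (α k)) = if j = k then 1 else 0) ∧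
        Submodule.span ℂ (Set.range Λ) = perp Q ∧
        (∀ j, Λ j - (∏ i, ((α j i).factorial : ℂ))⁻¹ • diffAt ξ (α j) ∈
          Submodule.span ℂ
            {L | ∃ β : Fin n → ℕ, β ∉ Set.range α ∧ (∑ i, β i) ≤ o ∧ L = diffAt ξ β})) :=
  exists_orthogonal_primal_dual_pair_general ξ Q δ hδ o ho
end

section
/- Let f ∈ ℂ[x]^N have an isolated root ξ with rank J_f(ξ) = r < n, and let f^{(1)} be an i-deflated system of order 1 of f (obtained by appending the polynomials Λ^x(f) for kernel-generating differential forms Λ^x whose coefficients are polynomials equal at ξ to a basis of part of ker J_f(ξ)). Then the nil-index satisfies o_ξ(f^{(1)}) < o_ξ(f), and consequently the multiplicity satisfies δ_ξ(f^{(1)}) < δ_ξ(f) while δ_ξ(f^{(1)}) ≥ 1. -/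
/-!
Pair dual elements with the shifted monomials `(x - ξ)^β`, which are dual to the operators
`∂^γ_ξ` up to the factor `β!`: the order of `Λ ∈ ℂ[∂_ξ]` is the largest `|β|` with
`Λ ((x - ξ)^β) ≠ 0`.

Let `T = ∑ j, λ_j ∂_j` be one of the deflating vector fields. It is a derivation mapping `(f)` into
`(f^{(1)})`, so for `Λ ∈ D(f^{(1)}) ⊆ D(f)` also `Λ ∘ T ∈ D(f)`, and both have order at most
`o = o_ξ(f)`. Since `T(ξ) ≠ 0`, the top-order part of `Λ ∘ T` is that of `Λ` multiplied by the
nonzero linear form `∑ j, λ_j(ξ) ∂_j`, and `ℂ[∂]` has no zero divisors; so `Λ` has order at most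
`o - 1`. For evaluation at `ξ`, which lies in `D(f^{(1)})`, this forces `o ≥ 1`. Hence
`o_ξ(f^{(1)}) < o`, and `D(f^{(1)}) ⊊ D(f)` because `D(f)` has an element of order `o`.
-/

open MvPolynomial

/-- `D = I^⊥ ∩ ℂ[∂_ξ]`, the dual of the local quotient ring at `ξ`;
its dimension is the multiplicity `δ_ξ`. -/
noncomputable def Dfull {n : ℕ} (ξ : Fin n → ℂ) (I : Ideal (MvPolynomial (Fin n) ℂ)) :
    Submodule ℂ (Module.Dual ℂ (MvPolynomial (Fin n) ℂ)) :=
  perp I ⊓ polyDiffOps ξ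

/-- `D_t`: the elements of `D` of order at most `t`. -/
noncomputable def Dt {n : ℕ} (ξ : Fin n → ℂ) (I : Ideal (MvPolynomial (Fin n) ℂ)) (t : ℕ) :
    Submodule ℂ (Module.Dual ℂ (MvPolynomial (Fin n) ℂ)) :=
  perp I ⊓ Submodule.span ℂ {Λ | ∃ β : Fin n → ℕ, (∑ i, β i) ≤ t ∧ Λ = diffAt ξ β}

open IsMulCommutative in
theorem prod_ofFn_pow_add_single {M : Type*} [Monoid M] {k : ℕ} (A : Fin k → M)
    (hA : ∀ i j, Commute (A i) (A j)) (β : Fin k → ℕ) (j : Fin k) :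
    (List.ofFn fun i => A i ^ (β + Pi.single j 1 : Fin k → ℕ) i).prod =
      (List.ofFn fun i => A i ^ β i).prod * A j := by
  have := Submonoid.isMulCommutative_closure M (s := Set.range A) (by
    rintro _ ⟨i, rfl⟩ _ ⟨i', rfl⟩; exact hA i i')
  let a : Fin k → Submonoid.closure (Set.range A) :=
    fun i => ⟨A i, Submonoid.subset_closure ⟨i, rfl⟩⟩
  have hcoe : ∀ γ : Fin k → ℕ,
      (List.ofFn fun i => A i ^ γ i).prod = ((∏ i, a i ^ γ i : _) : M) := by
    intro γ
    rw [← List.prod_ofFn, Submonoid.coe_list_prod, List.map_ofFn]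
    rfl
  rw [hcoe, hcoe, Pi.add_def]
  simp only [pow_add, Finset.prod_mul_distrib, Submonoid.coe_mul]
  congr
  rw [Finset.prod_eq_single j] <;> simp_all [a]

theorem pderiv_pderiv_comm {σ R : Type*} [CommRing R] (i j : σ) (p : MvPolynomial σ R) :
    pderiv i (pderiv j p) = pderiv j (pderiv i p) := by
  classical
  have h : ⁅pderiv i, pderiv j⁆ = (0 : Derivation R (MvPolynomial σ R) (MvPolynomial σ R)) :=
    derivation_ext fun k => by
      rw [Derivation.commutator_apply]; simp only [pderiv_X, Pi.single_apply]; split_ifs <;> simp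
  simpa [Derivation.commutator_apply, sub_eq_zero] using congr($h p)

noncomputable def vectorField {σ R : Type*} [CommSemiring R] [Fintype σ]
    (v : σ → MvPolynomial σ R) : Derivation R (MvPolynomial σ R) (MvPolynomial σ R) :=
  ∑ j, v j • pderiv j

theorem vectorField_apply {σ R : Type*} [CommSemiring R] [Fintype σ]
    (v : σ → MvPolynomial σ R) (p : MvPolynomial σ R) :
    vectorField v p = ∑ j, v j * pderiv j p := by
  rw [vectorField, ← Derivation.coeFnAddMonoidHom_apply, map_sum, Finset.sum_apply]
  simp

theorem Derivation.mem_of_mem_span {R A : Type*} [CommSemiring R] [CommSemiring A] [Algebra R A]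
    (D : Derivation R A A) {S : Set A} {J : Ideal A} (hS : S ⊆ J) (hDS : ∀ s ∈ S, D s ∈ J)
    {p : A} (hp : p ∈ Ideal.span S) : D p ∈ J := by
  induction hp using Submodule.span_induction with
  | mem s hs => exact hDS s hs
  | zero => simp
  | add _ _ _ _ h₁ h₂ => simpa using J.add_mem h₁ h₂
  | smul a x hx h =>
    rw [smul_eq_mul, D.leibniz]
    exact J.add_mem (J.mul_mem_left a h) (J.mul_mem_right _ (Ideal.span_le.mpr hS hx))

section

variable {n : ℕ}

@[elab_as_elim]
theorem induction_add_single {P : (Fin n → ℕ) → Prop} (zero : P 0)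
    (add_single : ∀ γ j, P γ → P (γ + Pi.single j 1)) (γ : Fin n → ℕ) : P γ := by
  have add_single' : ∀ δ j m, P δ → P (δ + Pi.single j m) := by
    intro δ j m hδ
    induction m with
    | zero => simpa using hδ
    | succ m ih => simpa [Pi.single_add, add_assoc] using add_single _ j ih
  rw [← Finset.univ_sum_single γ]
  induction (Finset.univ : Finset (Fin n)) using Finset.induction_on with
  | empty => simpa using zero
  | insert j s hj ih => simpa [Finset.sum_insert hj, add_comm] using add_single' _ j (γ j) ih

theorem sum_add_single (γ : Fin n → ℕ) (j : Fin n) :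
    ∑ i, (γ + Pi.single j 1 : Fin n → ℕ) i = ∑ i, γ i + 1 := by
  simp [Finset.sum_add_distrib]

theorem sub_single_add_single {β : Fin n → ℕ} {j : Fin n} (h : β j ≠ 0) :
    β - Pi.single j 1 + Pi.single j 1 = β := by
  ext i
  rcases eq_or_ne i j with rfl | hij
  · simp only [Pi.add_apply, Pi.sub_apply, Pi.single_eq_same]; omega
  · simp [hij]

theorem add_single_ne_of_apply_eq_zero (γ : Fin n → ℕ) {α : Fin n → ℕ} {j : Fin n}
    (h : α j = 0) : γ + Pi.single j 1 ≠ α := by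
  rintro rfl
  simp at h

def prodFactorial (β : Fin n → ℕ) : ℕ := ∏ i, (β i).factorial

theorem prodFactorial_ne_zero (β : Fin n → ℕ) : prodFactorial β ≠ 0 :=
  Finset.prod_ne_zero_iff.mpr fun i _ => (β i).factorial_ne_zero

theorem prodFactorial_add_single (γ : Fin n → ℕ) (j : Fin n) :
    prodFactorial (γ + Pi.single j 1) = (γ j + 1) * prodFactorial γ := by
  simp only [prodFactorial, Pi.add_apply]
  rw [← Finset.mul_prod_erase _ _ (Finset.mem_univ j),
    ← Finset.mul_prod_erase _ (fun i => (γ i).factorial) (Finset.mem_univ j)]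
  rw [Finset.prod_congr rfl fun i hi => by
    rw [Pi.single_eq_of_ne (Finset.ne_of_mem_erase hi), add_zero]]
  simp [Nat.factorial_succ, mul_assoc]

theorem mul_ite_sub_single (c : ℂ) (γ : Fin n → ℕ) {α : Fin n → ℕ} {j : Fin n}
    (h : α j ≠ 0) :
    (α j : ℂ) * (if γ = α - Pi.single j 1 then c * prodFactorial (α - Pi.single j 1) else 0) =
      if γ + Pi.single j 1 = α then c * prodFactorial α else 0 := by
  by_cases hγ : γ + Pi.single j 1 = α
  · subst hγ
    simp only [add_tsub_cancel_right, if_true, prodFactorial_add_single, Pi.add_apply,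
      Pi.single_eq_same]
    push_cast
    ring
  · have : γ ≠ α - Pi.single j 1 := fun h' => hγ (h' ▸ sub_single_add_single h)
    simp [hγ, this]

theorem diffAt_zero_apply_s12 (ξ : Fin n → ℂ) (p : MvPolynomial (Fin n) ℂ) :
    diffAt ξ 0 p = eval ξ p := by
  simp [diffAt, pd, MvPolynomial.aeval_eq_eval]

theorem diffAt_zero_ne_zero (ξ : Fin n → ℂ) : diffAt ξ 0 ≠ 0 := fun h => by
  simpa [diffAt_zero_apply_s12] using LinearMap.congr_fun h 1

theorem diffAt_add_single_apply (ξ : Fin n → ℂ) (γ : Fin n → ℕ) (j : Fin n)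
    (p : MvPolynomial (Fin n) ℂ) :
    diffAt ξ (γ + Pi.single j 1) p = diffAt ξ γ (pderiv j p) := by
  simp only [diffAt, pd, LinearMap.comp_apply]
  rw [prod_ofFn_pow_add_single _ (fun i j => LinearMap.ext (pderiv_pderiv_comm i j))]
  rfl

noncomputable def monomialAt (ξ : Fin n → ℂ) (β : Fin n → ℕ) : MvPolynomial (Fin n) ℂ :=
  ∏ i, (X i - C (ξ i)) ^ β i

theorem eval_monomialAt (ξ : Fin n → ℂ) (β : Fin n → ℕ) :
    eval ξ (monomialAt ξ β) = if β = 0 then 1 else 0 := by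
  rw [monomialAt, map_prod]
  split_ifs with hβ
  · simp [hβ]
  · obtain ⟨j, hj⟩ := Function.ne_iff.mp hβ
    exact Finset.prod_eq_zero (Finset.mem_univ j) (by simp [zero_pow hj])

theorem pderiv_monomialAt (ξ : Fin n → ℂ) (β : Fin n → ℕ) (j : Fin n) :
    pderiv j (monomialAt ξ β) =
      (β j : MvPolynomial (Fin n) ℂ) * monomialAt ξ (β - Pi.single j 1) := by
  have hrest : pderiv j (∏ i ∈ Finset.univ.erase j, (X i - C (ξ i)) ^ β i) = 0 := by
    refine pderiv_eq_zero_of_notMem_vars fun hj => ?_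
    obtain ⟨i, hi, hji⟩ := Finset.mem_biUnion.mp (vars_prod _ hj)
    have := vars_sub_subset _ (vars_pow _ _ hji)
    simp only [vars_X, vars_C, Finset.union_empty, Finset.mem_singleton] at this
    exact Finset.ne_of_mem_erase hi this.symm
  have hβ' : ∀ i ∈ Finset.univ.erase j, (β - Pi.single j 1 : Fin n → ℕ) i = β i :=
    fun i hi => by simp [Pi.single_eq_of_ne (Finset.ne_of_mem_erase hi)]
  simp only [monomialAt, ← Finset.mul_prod_erase _ _ (Finset.mem_univ j), pderiv_mul, hrest,
    Finset.prod_congr rfl fun i hi => congrArg ((X i - C (ξ i)) ^ ·) (hβ' i hi), pderiv_pow]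
  simp only [map_sub, pderiv_X, Pi.single_eq_same, derivation_C, sub_zero, mul_one, mul_zero,
    add_zero, Pi.sub_apply]
  ring

theorem diffAt_monomialAt (ξ : Fin n → ℂ) (γ β : Fin n → ℕ) :
    diffAt ξ γ (monomialAt ξ β) = if γ = β then (prodFactorial β : ℂ) else 0 := by
  induction γ using induction_add_single generalizing β with
  | zero =>
    rw [diffAt_zero_apply_s12, eval_monomialAt]
    rcases eq_or_ne β 0 with rfl | hβ
    · simp [prodFactorial]
    · simp [hβ, Ne.symm hβ]
  | add_single γ j ih =>
    rw [diffAt_add_single_apply, pderiv_monomialAt, ← nsmul_eq_mul, map_nsmul, nsmul_eq_mul, ih]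
    rcases eq_or_ne (β j) 0 with hβ | hβ
    · simp [hβ, add_single_ne_of_apply_eq_zero γ hβ]
    · simpa using mul_ite_sub_single 1 γ hβ

theorem diffAt_mul_monomialAt (ξ : Fin n → ℂ) {γ α : Fin n → ℕ}
    (hle : ∑ i, γ i ≤ ∑ i, α i) (g : MvPolynomial (Fin n) ℂ) :
    diffAt ξ γ (g * monomialAt ξ α) = if γ = α then eval ξ g * prodFactorial α else 0 := by
  induction γ using induction_add_single generalizing g α with
  | zero =>
    rw [diffAt_zero_apply_s12, map_mul, eval_monomialAt]
    rcases eq_or_ne α 0 with rfl | hα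
    · simp [prodFactorial]
    · simp [hα, Ne.symm hα]
  | add_single γ j ih =>
    rw [sum_add_single] at hle
    have hγα : γ ≠ α := by rintro rfl; omega
    rw [diffAt_add_single_apply, pderiv_mul, pderiv_monomialAt, map_add,
      ih (by omega), if_neg hγα, zero_add, mul_left_comm, ← nsmul_eq_mul, map_nsmul, nsmul_eq_mul]
    rcases eq_or_ne (α j) 0 with hα | hα
    · simp [hα, add_single_ne_of_apply_eq_zero γ hα]
    · have : ∑ i, α i = ∑ i, (α - Pi.single j 1 : Fin n → ℕ) i + 1 := by
        rw [← sum_add_single, sub_single_add_single hα]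
      rw [ih (by omega), mul_ite_sub_single _ γ hα]

noncomputable def polyDiffOpsLE (ξ : Fin n → ℂ) (t : ℕ) :
    Submodule ℂ (Module.Dual ℂ (MvPolynomial (Fin n) ℂ)) :=
  Submodule.span ℂ {Λ | ∃ β : Fin n → ℕ, (∑ i, β i) ≤ t ∧ Λ = diffAt ξ β}

theorem polyDiffOpsLE_le (ξ : Fin n → ℂ) (t : ℕ) : polyDiffOpsLE ξ t ≤ polyDiffOps ξ :=
  Submodule.span_le.mpr fun _ ⟨β, _, hβ⟩ => Submodule.subset_span ⟨β, hβ.symm⟩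

instance (ξ : Fin n → ℂ) (t : ℕ) : FiniteDimensional ℂ (polyDiffOpsLE ξ t) := by
  refine FiniteDimensional.span_of_finite ℂ ?_
  have : {β : Fin n → ℕ | ∑ i, β i ≤ t}.Finite :=
    (Set.finite_Iic (fun _ => t)).subset fun β hβ i =>
      (Finset.single_le_sum (fun i _ => Nat.zero_le (β i)) (Finset.mem_univ i)).trans hβ
  simpa [eq_comm, Set.image] using this.image (diffAt ξ)

theorem apply_monomialAt_eq_zero_of_mem_polyDiffOpsLE {ξ : Fin n → ℂ} {t : ℕ}
    {Λ : Module.Dual ℂ (MvPolynomial (Fin n) ℂ)} (hΛ : Λ ∈ polyDiffOpsLE ξ t)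
    {β : Fin n → ℕ} (hβ : t < ∑ i, β i) : Λ (monomialAt ξ β) = 0 := by
  refine (Submodule.span_le (p := LinearMap.ker (LinearMap.applyₗ (monomialAt ξ β))) |>.mpr ?_)
    hΛ
  rintro _ ⟨γ, hγ, rfl⟩
  have : γ ≠ β := by rintro rfl; omega
  simp [diffAt_monomialAt, this]

theorem finsupp_sum_diffAt_apply_monomialAt (ξ : Fin n → ℂ) (c : (Fin n → ℕ) →₀ ℂ)
    (β : Fin n → ℕ) :
    (c.sum fun γ a => a • diffAt ξ γ) (monomialAt ξ β) = c β * prodFactorial β := by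
  simp +contextual [Finsupp.sum, diffAt_monomialAt]

theorem mem_polyDiffOpsLE_iff {ξ : Fin n → ℂ} {t : ℕ}
    {Λ : Module.Dual ℂ (MvPolynomial (Fin n) ℂ)} (hΛ : Λ ∈ polyDiffOps ξ) :
    Λ ∈ polyDiffOpsLE ξ t ↔ ∀ β : Fin n → ℕ, t < ∑ i, β i → Λ (monomialAt ξ β) = 0 := by
  refine ⟨fun h β hβ => apply_monomialAt_eq_zero_of_mem_polyDiffOpsLE h hβ, fun h => ?_⟩
  obtain ⟨c, rfl⟩ := Finsupp.mem_span_range_iff_exists_finsupp.mp hΛ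
  refine Submodule.sum_mem _ fun γ hγ =>
    Submodule.smul_mem _ _ (Submodule.subset_span ⟨γ, ?_, rfl⟩)
  by_contra! hlt
  have := h γ hlt
  rw [finsupp_sum_diffAt_apply_monomialAt, mul_eq_zero, Nat.cast_eq_zero] at this
  exact this.elim (Finsupp.mem_support_iff.mp hγ) (prodFactorial_ne_zero γ)

theorem apply_mul_monomialAt_of_mem_polyDiffOpsLE {ξ : Fin n → ℂ} {t : ℕ}
    {Λ : Module.Dual ℂ (MvPolynomial (Fin n) ℂ)} (hΛ : Λ ∈ polyDiffOpsLE ξ t)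
    {α : Fin n → ℕ} (hα : t ≤ ∑ i, α i) (g : MvPolynomial (Fin n) ℂ) :
    Λ (g * monomialAt ξ α) = eval ξ g * Λ (monomialAt ξ α) := by
  induction hΛ using Submodule.span_induction with
  | mem _ h =>
    obtain ⟨γ, hγ, rfl⟩ := h
    rw [diffAt_mul_monomialAt ξ (hγ.trans hα), diffAt_monomialAt, mul_ite, mul_zero]
  | zero => simp
  | add _ _ _ _ h₁ h₂ => simp [h₁, h₂, mul_add]
  | smul a _ _ h => simp [h, mul_left_comm]

theorem apply_mul_pderiv_monomialAt {ξ : Fin n → ℂ} {t : ℕ}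
    {Λ : Module.Dual ℂ (MvPolynomial (Fin n) ℂ)} (hΛ : Λ ∈ polyDiffOpsLE ξ t)
    {β : Fin n → ℕ} (hβ : ∑ i, β i = t + 1) (g : MvPolynomial (Fin n) ℂ) (j : Fin n) :
    Λ (g * pderiv j (monomialAt ξ β)) =
      β j * (eval ξ g * Λ (monomialAt ξ (β - Pi.single j 1))) := by
  rw [pderiv_monomialAt, mul_left_comm, ← nsmul_eq_mul, map_nsmul, nsmul_eq_mul]
  rcases eq_or_ne (β j) 0 with hβj | hβj
  · simp [hβj]
  · have : ∑ i, β i = ∑ i, (β - Pi.single j 1 : Fin n → ℕ) i + 1 := by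
      rw [← sum_add_single, sub_single_add_single hβj]
    rw [apply_mul_monomialAt_of_mem_polyDiffOpsLE hΛ (by omega)]

theorem comp_mem_polyDiffOps {ξ : Fin n → ℂ}
    {T : MvPolynomial (Fin n) ℂ →ₗ[ℂ] MvPolynomial (Fin n) ℂ}
    (hT : ∀ γ, (diffAt ξ γ).comp T ∈ polyDiffOps ξ)
    {Λ : Module.Dual ℂ (MvPolynomial (Fin n) ℂ)} (hΛ : Λ ∈ polyDiffOps ξ) :
    Λ.comp T ∈ polyDiffOps ξ := by
  induction hΛ using Submodule.span_induction with
  | mem _ h => obtain ⟨γ, rfl⟩ := h; exact hT γ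
  | zero => simp
  | add _ _ _ _ h₁ h₂ => simpa [LinearMap.add_comp] using add_mem h₁ h₂
  | smul a _ _ h => simpa [LinearMap.smul_comp] using Submodule.smul_mem _ a h

theorem comp_pderiv_mem_polyDiffOps {ξ : Fin n → ℂ}
    {Λ : Module.Dual ℂ (MvPolynomial (Fin n) ℂ)} (hΛ : Λ ∈ polyDiffOps ξ) (j : Fin n) :
    Λ.comp (pderiv j).toLinearMap ∈ polyDiffOps ξ :=
  comp_mem_polyDiffOps (fun γ => Submodule.subset_span ⟨γ + Pi.single j 1,
    LinearMap.ext fun p => diffAt_add_single_apply ξ γ j p⟩) hΛ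

theorem comp_mulLeft_mem_polyDiffOps {ξ : Fin n → ℂ}
    {Λ : Module.Dual ℂ (MvPolynomial (Fin n) ℂ)} (hΛ : Λ ∈ polyDiffOps ξ)
    (g : MvPolynomial (Fin n) ℂ) :
    Λ.comp (LinearMap.mulLeft ℂ g) ∈ polyDiffOps ξ := by
  refine comp_mem_polyDiffOps (fun γ => ?_) hΛ
  induction γ using induction_add_single generalizing g with
  | zero =>
    have : (diffAt ξ 0).comp (LinearMap.mulLeft ℂ g) = eval ξ g • diffAt ξ 0 :=
      LinearMap.ext fun p => by simp [diffAt_zero_apply_s12]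
    rw [this]
    exact Submodule.smul_mem _ _ (Submodule.subset_span ⟨0, rfl⟩)
  | add_single γ j ih =>
    have : (diffAt ξ (γ + Pi.single j 1)).comp (LinearMap.mulLeft ℂ g) =
        (diffAt ξ γ).comp (LinearMap.mulLeft ℂ (pderiv j g)) +
          ((diffAt ξ γ).comp (LinearMap.mulLeft ℂ g)).comp (pderiv j).toLinearMap :=
      LinearMap.ext fun p => by
        rw [LinearMap.comp_apply, LinearMap.mulLeft_apply, diffAt_add_single_apply, pderiv_mul,
          map_add]
        rfl
    rw [this]
    exact add_mem (ih _) (comp_pderiv_mem_polyDiffOps (ih g) j)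

theorem comp_vectorField_mem_polyDiffOps {ξ : Fin n → ℂ}
    {Λ : Module.Dual ℂ (MvPolynomial (Fin n) ℂ)} (hΛ : Λ ∈ polyDiffOps ξ)
    (v : Fin n → MvPolynomial (Fin n) ℂ) :
    Λ.comp (vectorField v : MvPolynomial (Fin n) ℂ →ₗ[ℂ] MvPolynomial (Fin n) ℂ) ∈
      polyDiffOps ξ := by
  have : Λ.comp (vectorField v : MvPolynomial (Fin n) ℂ →ₗ[ℂ] MvPolynomial (Fin n) ℂ) =
      ∑ j, (Λ.comp (LinearMap.mulLeft ℂ (v j))).comp (pderiv j).toLinearMap :=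
    LinearMap.ext fun p => by simp [vectorField_apply]
  rw [this]
  exact Submodule.sum_mem _ fun j _ =>
    comp_pderiv_mem_polyDiffOps (comp_mulLeft_mem_polyDiffOps hΛ (v j)) j

theorem apply_monomialAt_eq_zero_of_comp_vectorField {ξ : Fin n → ℂ} {o : ℕ}
    {v : Fin n → MvPolynomial (Fin n) ℂ} (hv : (fun j => eval ξ (v j)) ≠ 0)
    {Λ : Module.Dual ℂ (MvPolynomial (Fin n) ℂ)} (hΛ : Λ ∈ polyDiffOpsLE ξ o)
    (hΛv : ∀ β : Fin n → ℕ, o < ∑ i, β i → Λ (vectorField v (monomialAt ξ β)) = 0)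
    {α : Fin n → ℕ} (hα : ∑ i, α i = o) : Λ (monomialAt ξ α) = 0 := by
  classical
  by_contra hΛα
  obtain ⟨j₀, hj₀⟩ : ∃ j, eval ξ (v j) ≠ 0 := Function.ne_iff.mp hv
  -- Among the `γ` of order `o` with `Λ ((x - ξ)^γ) ≠ 0` take one with `γ j₀` maximal. Pairing
  -- `Λ ∘ (v ⬝ ∂)` with `(x - ξ)^(γ + e j₀)` then only sees the `j₀`-term, which is
  -- `(γ j₀ + 1) v j₀(ξ) Λ ((x - ξ)^γ) ≠ 0`.
  set F := (Finset.Nat.antidiagonalTuple n o).filter fun γ => Λ (monomialAt ξ γ) ≠ 0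
  obtain ⟨γ, hγF, hγmax⟩ := F.exists_max_image (· j₀)
    ⟨α, Finset.mem_filter.mpr ⟨Finset.Nat.mem_antidiagonalTuple.mpr hα, hΛα⟩⟩
  obtain ⟨hγo, hγ⟩ := Finset.mem_filter.mp hγF
  rw [Finset.Nat.mem_antidiagonalTuple] at hγo
  have hsum : ∑ i, (γ + Pi.single j₀ 1 : Fin n → ℕ) i = o + 1 := by rw [sum_add_single, hγo]
  have hzero := hΛv (γ + Pi.single j₀ 1) (by omega)
  rw [vectorField_apply, map_sum, Finset.sum_eq_single j₀] at hzero
  · rw [apply_mul_pderiv_monomialAt hΛ hsum, add_tsub_cancel_right] at hzero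
    simp [hj₀, hγ, Nat.cast_add_one_ne_zero] at hzero
  · intro j _ hj
    rw [apply_mul_pderiv_monomialAt hΛ hsum]
    rcases eq_or_ne ((γ + Pi.single j₀ 1 : Fin n → ℕ) j) 0 with h | h
    · simp [h]
    · have hmem : γ + Pi.single j₀ 1 - Pi.single j 1 ∉ F := fun hF => by
        have := hγmax _ hF
        simp [Pi.single_eq_of_ne (Ne.symm hj)] at this
      have : ∑ i, (γ + Pi.single j₀ 1 - Pi.single j 1 : Fin n → ℕ) i = o := by
        have := sum_add_single (γ + Pi.single j₀ 1 - Pi.single j 1) j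
        rw [sub_single_add_single h] at this
        omega
      have hΛ0 : Λ (monomialAt ξ (γ + Pi.single j₀ 1 - Pi.single j 1)) = 0 := by
        by_contra h'
        exact hmem (Finset.mem_filter.mpr ⟨Finset.Nat.mem_antidiagonalTuple.mpr this, h'⟩)
      rw [hΛ0, mul_zero, mul_zero]
  · simp

theorem mem_perp_span_range_iff {ι : Type*} [Fintype ι]
    {F : ι → MvPolynomial (Fin n) ℂ} {Λ : Module.Dual ℂ (MvPolynomial (Fin n) ℂ)} :
    Λ ∈ perp (Ideal.span (Set.range F)) ↔ ∀ g k, Λ (g * F k) = 0 := by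
  simp only [perp, Submodule.mem_dualAnnihilator, Submodule.restrictScalars_mem]
  refine ⟨fun h g k => h _ (Ideal.mul_mem_left _ g (Ideal.subset_span ⟨k, rfl⟩)), ?_⟩
  rintro h _ hp
  obtain ⟨c, rfl⟩ := Ideal.mem_span_range_iff_exists_fun.mp hp
  simp [h]

theorem comp_mem_perp {I J : Ideal (MvPolynomial (Fin n) ℂ)}
    {T : MvPolynomial (Fin n) ℂ →ₗ[ℂ] MvPolynomial (Fin n) ℂ} (hT : ∀ p ∈ I, T p ∈ J)
    {Λ : Module.Dual ℂ (MvPolynomial (Fin n) ℂ)} (hΛ : Λ ∈ perp J) : Λ.comp T ∈ perp I := by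
  simp only [perp, Submodule.mem_dualAnnihilator, Submodule.restrictScalars_mem] at hΛ ⊢
  exact fun p hp => hΛ _ (hT p hp)

theorem Dfull_anti (ξ : Fin n → ℂ) {I J : Ideal (MvPolynomial (Fin n) ℂ)} (h : I ≤ J) :
    Dfull ξ J ≤ Dfull ξ I :=
  inf_le_inf_right _ (Submodule.dualAnnihilator_anti fun _ hp => h hp)

theorem Dt_le_Dfull (ξ : Fin n → ℂ) (I : Ideal (MvPolynomial (Fin n) ℂ)) (t : ℕ) :
    Dt ξ I t ≤ Dfull ξ I :=
  inf_le_inf_left _ (polyDiffOpsLE_le ξ t)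

theorem Dt_eq_Dfull_iff (ξ : Fin n → ℂ) (I : Ideal (MvPolynomial (Fin n) ℂ)) (t : ℕ) :
    Dt ξ I t = Dfull ξ I ↔ Dfull ξ I ≤ polyDiffOpsLE ξ t :=
  ⟨fun h => h ▸ inf_le_right, fun h => (Dt_le_Dfull ξ I t).antisymm (le_inf inf_le_left h)⟩

theorem apply_monomialAt_eq_zero_of_mem_Dfull {ξ : Fin n → ℂ}
    {I J : Ideal (MvPolynomial (Fin n) ℂ)} {v : Fin n → MvPolynomial (Fin n) ℂ}
    (hv : (fun j => eval ξ (v j)) ≠ 0) (hIJ : I ≤ J) (hvIJ : ∀ p ∈ I, vectorField v p ∈ J)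
    {o : ℕ} (ho : Dt ξ I o = Dfull ξ I) {Λ : Module.Dual ℂ (MvPolynomial (Fin n) ℂ)}
    (hΛ : Λ ∈ Dfull ξ J) {β : Fin n → ℕ} (hβ : o ≤ ∑ i, β i) : Λ (monomialAt ξ β) = 0 := by
  have hI := (Dt_eq_Dfull_iff ξ I o).mp ho
  have hΛo : Λ ∈ polyDiffOpsLE ξ o := hI (Dfull_anti ξ hIJ hΛ)
  have hΛvo : Λ.comp (vectorField v : MvPolynomial (Fin n) ℂ →ₗ[ℂ] MvPolynomial (Fin n) ℂ) ∈
      polyDiffOpsLE ξ o :=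
    hI ⟨comp_mem_perp hvIJ hΛ.1, comp_vectorField_mem_polyDiffOps hΛ.2 v⟩
  rcases hβ.eq_or_lt with hβ | hβ
  · exact apply_monomialAt_eq_zero_of_comp_vectorField hv hΛo
      (fun β hβ => apply_monomialAt_eq_zero_of_mem_polyDiffOpsLE hΛvo hβ) hβ.symm
  · exact apply_monomialAt_eq_zero_of_mem_polyDiffOpsLE hΛo hβ

theorem pos_and_Dfull_le_polyDiffOpsLE_pred {ξ : Fin n → ℂ}
    {I J : Ideal (MvPolynomial (Fin n) ℂ)} {v : Fin n → MvPolynomial (Fin n) ℂ}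
    (hv : (fun j => eval ξ (v j)) ≠ 0) (hIJ : I ≤ J) (hvIJ : ∀ p ∈ I, vectorField v p ∈ J)
    {o : ℕ} (ho : Dt ξ I o = Dfull ξ I) (hJ : diffAt ξ 0 ∈ Dfull ξ J) :
    0 < o ∧ Dfull ξ J ≤ polyDiffOpsLE ξ (o - 1) := by
  have hvanish {Λ} (hΛ : Λ ∈ Dfull ξ J) {β : Fin n → ℕ} (hβ : o ≤ ∑ i, β i) :=
    apply_monomialAt_eq_zero_of_mem_Dfull hv hIJ hvIJ ho hΛ hβ
  refine ⟨Nat.pos_of_ne_zero fun h => ?_, fun Λ hΛ =>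
    (mem_polyDiffOpsLE_iff hΛ.2).mpr fun β hβ => hvanish hΛ (by omega)⟩
  simpa [diffAt_zero_apply_s12, eval_monomialAt] using hvanish hJ (β := 0) (by omega)

end

theorem deflation_decreases_nil_index_and_multiplicity_general {n N m : ℕ}
    (f : Fin N → MvPolynomial (Fin n) ℂ) (ξ : Fin n → ℂ)
    (hroot : ∀ k, MvPolynomial.eval ξ (f k) = 0)
    (hm : 0 < m) (lam : Fin m → Fin n → MvPolynomial (Fin n) ℂ)
    -- the values at ξ of the coefficient vectors are nonzero kernel elements of J_f(ξ)
    (hker : ∀ i k, ∑ j, MvPolynomial.eval ξ (lam i j) *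
      MvPolynomial.eval ξ (MvPolynomial.pderiv j (f k)) = 0)
    (hne : ∀ i, (fun j => MvPolynomial.eval ξ (lam i j)) ≠ 0)
    (f1 : Fin N ⊕ (Fin m × Fin N) → MvPolynomial (Fin n) ℂ)
    (hf1 : f1 = Sum.elim f fun ik => ∑ j, lam ik.1 j * MvPolynomial.pderiv j (f ik.2))
    (I I1 : Ideal (MvPolynomial (Fin n) ℂ))
    (hI : I = Ideal.span (Set.range f)) (hI1 : I1 = Ideal.span (Set.range f1))
    (o o1 : ℕ)
    (ho : Dt ξ I o = Dfull ξ I) (homin : ∀ t, Dt ξ I t = Dfull ξ I → o ≤ t)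
    (ho1min : ∀ t, Dt ξ I1 t = Dfull ξ I1 → o1 ≤ t) :
    o1 < o ∧
    1 ≤ Module.finrank ℂ (Dfull ξ I1) ∧
    Module.finrank ℂ (Dfull ξ I1) < Module.finrank ℂ (Dfull ξ I) := by
  have hf1_inl (k : Fin N) : f k ∈ I1 := hI1 ▸ Ideal.subset_span ⟨.inl k, by rw [hf1]; rfl⟩
  have hf1_inr (i : Fin m) (k : Fin N) : vectorField (lam i) (f k) ∈ I1 :=
    hI1 ▸ Ideal.subset_span ⟨.inr (i, k), by rw [hf1, vectorField_apply]; rfl⟩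
  have hIJ : I ≤ I1 := hI ▸ Ideal.span_le.mpr (Set.range_subset_iff.mpr hf1_inl)
  have hev : diffAt ξ 0 ∈ Dfull ξ I1 := by
    refine ⟨hI1 ▸ mem_perp_span_range_iff.mpr fun g k => ?_, Submodule.subset_span ⟨0, rfl⟩⟩
    rcases k with k | ⟨i, k⟩ <;> simp [hf1, diffAt_zero_apply_s12, hroot, hker]
  obtain ⟨ho_pos, hD1⟩ := pos_and_Dfull_le_polyDiffOpsLE_pred (hne ⟨0, hm⟩) hIJ
    (fun p hp => (vectorField _).mem_of_mem_span (Set.range_subset_iff.mpr hf1_inl)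
      (Set.forall_mem_range.mpr (hf1_inr _)) (hI ▸ hp)) ho hev
  have hlt : Dfull ξ I1 < Dfull ξ I := (Dfull_anti ξ hIJ).lt_of_ne fun h => by
    have := homin (o - 1) ((Dt_eq_Dfull_iff ξ I _).mpr (h ▸ hD1))
    omega
  have : FiniteDimensional ℂ (Dfull ξ I) :=
    Submodule.finiteDimensional_of_le ((Dt_eq_Dfull_iff ξ I o).mp ho)
  have : FiniteDimensional ℂ (Dfull ξ I1) := Submodule.finiteDimensional_of_le hD1
  have : Nontrivial (Dfull ξ I1) := Submodule.nontrivial_iff_ne_bot.mpr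
    ((Submodule.ne_bot_iff _).mpr ⟨_, hev, diffAt_zero_ne_zero ξ⟩)
  exact ⟨(ho1min _ ((Dt_eq_Dfull_iff ξ I1 _).mpr hD1)).trans_lt (by omega), Module.finrank_pos,
    Submodule.finrank_lt_finrank_of_lt hlt⟩

/-- One step of order-`1` deflation strictly decreases the nil-index `o_ξ` and the
multiplicity `δ_ξ`, while keeping `ξ` a root (`δ_ξ(f^{(1)}) ≥ 1`). -/
theorem deflation_decreases_nil_index_and_multiplicity {n N m : ℕ}
    (f : Fin N → MvPolynomial (Fin n) ℂ) (ξ : Fin n → ℂ)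
    (hroot : ∀ k, MvPolynomial.eval ξ (f k) = 0)
    (hiso : ∃ U ∈ nhds ξ, ∀ x ∈ U, (∀ k, MvPolynomial.eval x (f k) = 0) → x = ξ)
    (hm : 0 < m) (lam : Fin m → Fin n → MvPolynomial (Fin n) ℂ)
    -- the values at ξ of the coefficient vectors are nonzero kernel elements of J_f(ξ)
    (hker : ∀ i k, ∑ j, MvPolynomial.eval ξ (lam i j) *
      MvPolynomial.eval ξ (MvPolynomial.pderiv j (f k)) = 0)
    (hne : ∀ i, (fun j => MvPolynomial.eval ξ (lam i j)) ≠ 0)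
    (f1 : Fin N ⊕ (Fin m × Fin N) → MvPolynomial (Fin n) ℂ)
    (hf1 : f1 = Sum.elim f fun ik => ∑ j, lam ik.1 j * MvPolynomial.pderiv j (f ik.2))
    (I I1 : Ideal (MvPolynomial (Fin n) ℂ))
    (hI : I = Ideal.span (Set.range f)) (hI1 : I1 = Ideal.span (Set.range f1))
    (o o1 : ℕ)
    (ho : Dt ξ I o = Dfull ξ I) (homin : ∀ t, Dt ξ I t = Dfull ξ I → o ≤ t)
    (ho1 : Dt ξ I1 o1 = Dfull ξ I1) (ho1min : ∀ t, Dt ξ I1 t = Dfull ξ I1 → o1 ≤ t) :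
    o1 < o ∧
    1 ≤ Module.finrank ℂ (Dfull ξ I1) ∧
    Module.finrank ℂ (Dfull ξ I1) < Module.finrank ℂ (Dfull ξ I) :=
  deflation_decreases_nil_index_and_multiplicity_general f ξ hroot hm lam hker hne f1 hf1 I I1 hI
    hI1 o o1 ho homin ho1min
end

section
/- Let K ⊆ ℂ, M_1(μ),...,M_n(μ) be the δ×δ parametric multiplication matrices with entries 0, 1, or variables μ_{α,β}, and N_{z,μ}(p) = Σ_γ (1/γ!)∂^γ_z(p)·M(μ)^γ[1] the parametric normal form. Then for every p ∈ K[x] and i = 1,...,n: N_{z,μ}(x_i·p) = x_i·N_{z,μ}(p) + M_i(μ)·N_{z,μ}(p) + O_{i,μ}(p), where p ↦ O_{i,μ}(p) is K-linear and takes values in the commutator ideal C generated by the entries of M_i(μ)M_j(μ) − M_j(μ)M_i(μ). -/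
open MvPolynomial

/-- `M^γ = M_1^{γ_1}···M_n^{γ_n}` (in this fixed order) for a family of matrices. -/
noncomputable def matPow {n δ : ℕ} {R : Type*} [CommRing R]
    (M : Fin n → Matrix (Fin δ) (Fin δ) R) (γ : Fin n → ℕ) : Matrix (Fin δ) (Fin δ) R :=
  (List.ofFn fun i : Fin n => (M i) ^ (γ i)).prod

/-!
The Weyl relation `[∂_i, x_i] = 1` gives `∂^γ (x_i p) = x_i ∂^γ p + γ_i ∂^{γ - e_i} p`, so after
reindexing `γ = β + e_i` the normal form of `x_i p` is
`x_i N(p) + ∑_β (1/β!) ∂^β p · M^{β + e_i}[1]`; the boundary term `β_i = δ` vanishes because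
`M^γ = 0` for `|γ| ≥ δ`. Modulo the commutator ideal the `M_j` commute, so `M^{β + e_i} ≡ M_i M^β`
entrywise, and `O(p) = ∑_β (1/β!) ∂^β p · (M^{β + e_i} - M_i M^β)[1]` is `K`-linear with entries
in `C`.
-/

open Function
open scoped Matrix

theorem List.prod_ofFn_update_mul {M : Type*} [Monoid M] {n : ℕ} (f : Fin n → M) (i : Fin n)
    (x y : M) (hx : ∀ j, Commute x (f j)) :
    (List.ofFn (update f i (x * y))).prod = x * (List.ofFn (update f i y)).prod := by
  induction n with
  | zero => exact i.elim0
  | succ n ih =>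
    simp only [List.ofFn_succ, List.prod_cons]
    rcases Fin.eq_zero_or_eq_succ i with rfl | ⟨i, rfl⟩
    · simp [mul_assoc]
    · simp only [update_of_ne (Fin.succ_ne_zero i).symm]
      change f 0 * (List.ofFn (Fin.tail (update f i.succ (x * y)))).prod =
        x * (f 0 * (List.ofFn (Fin.tail (update f i.succ y))).prod)
      rw [Fin.tail_update_succ, Fin.tail_update_succ, ih (Fin.tail f) i fun j => hx j.succ,
        ← mul_assoc, ← (hx 0).eq, mul_assoc]

theorem pow_mul_eq_mul_pow_add_of_mul_eq_mul_add_one {S : Type*} [Ring S] {d l : S}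
    (h : d * l = l * d + 1) (k : ℕ) : d ^ k * l = l * d ^ k + k • d ^ (k - 1) := by
  induction k with
  | zero => simp
  | succ k ih =>
    rw [pow_succ, mul_assoc, h, mul_add, mul_one, ← mul_assoc, ih, add_mul, mul_assoc,
      ← pow_succ, smul_mul_assoc, add_assoc, Nat.add_sub_cancel, succ_nsmul]
    rcases k with _ | k
    · simp
    · rw [Nat.add_sub_cancel, ← pow_succ]

namespace MvPolynomial

variable {σ R : Type*} [CommRing R]

theorem commute_pderiv (i j : σ) :
    Commute ((pderiv i).toLinearMap : Module.End R (MvPolynomial σ R)) (pderiv j).toLinearMap := by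
  classical
  have hbracket : ⁅pderiv i, pderiv j⁆ = (0 : Derivation R (MvPolynomial σ R) (MvPolynomial σ R)) :=
    derivation_ext fun k => by
      rw [Derivation.commutator_apply, pderiv_X, pderiv_X, Pi.single_apply, Pi.single_apply]
      split_ifs <;> simp
  refine LinearMap.ext fun p => ?_
  simpa [Derivation.commutator_apply, sub_eq_zero] using congr($hbracket p)

theorem commute_pderiv_mulLeft_X {i j : σ} (h : j ≠ i) :
    Commute ((pderiv j).toLinearMap : Module.End R (MvPolynomial σ R))
      (LinearMap.mulLeft R (X i)) :=
  LinearMap.ext fun p => by simp [pderiv_X_of_ne h.symm]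

theorem pderiv_mul_mulLeft_X_self (i : σ) :
    ((pderiv i).toLinearMap : Module.End R (MvPolynomial σ R)) * LinearMap.mulLeft R (X i) =
      LinearMap.mulLeft R (X i) * (pderiv i).toLinearMap + 1 :=
  LinearMap.ext fun p => by simp [add_comm]

end MvPolynomial

section PartialDerivatives

variable {n : ℕ} {K : Type*} [CommRing K]

theorem pd_update_eq_pow_mul (γ : Fin n → ℕ) (i : Fin n) (k : ℕ) :
    pd (update γ i k) = ((pderiv i).toLinearMap : Module.End K _) ^ k * pd (update γ i 0) := by
  have hf : ∀ k, (fun j => ((pderiv j).toLinearMap : Module.End K _) ^ update γ i k j) =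
      update (fun j => (pderiv j).toLinearMap ^ γ j) i ((pderiv i).toLinearMap ^ k) :=
    fun k => funext fun j => apply_update (fun j e => (pderiv j).toLinearMap ^ e) γ i k j
  rw [pd, pd, hf, hf, pow_zero, ← List.prod_ofFn_update_mul _ _ _ _
    fun j => (commute_pderiv i j).pow_pow k (γ j), mul_one]

theorem pd_X_mul (γ : Fin n → ℕ) (i : Fin n) (p : MvPolynomial (Fin n) K) :
    pd γ (X i * p) = X i * pd γ p + γ i • pd (update γ i (γ i - 1)) p := by
  set L := LinearMap.mulLeft K (X i : MvPolynomial (Fin n) K)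
  have hL : Commute (pd (update γ i 0)) L := by
    refine Commute.list_prod_left _ _ fun A hA => ?_
    obtain ⟨j, rfl⟩ := List.mem_ofFn.mp hA
    rcases eq_or_ne j i with rfl | hj
    · simp
    · simpa [update_of_ne hj] using (commute_pderiv_mulLeft_X hj).pow_left (γ j)
  have key : pd γ * L = L * pd γ + γ i • pd (update γ i (γ i - 1)) := by
    conv_lhs => rw [← update_eq_self i γ, pd_update_eq_pow_mul, mul_assoc, hL.eq, ← mul_assoc,
      pow_mul_eq_mul_pow_add_of_mul_eq_mul_add_one (pderiv_mul_mulLeft_X_self i)]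
    rw [pd_update_eq_pow_mul γ i (γ i - 1), add_mul, mul_assoc, smul_mul_assoc,
      ← pd_update_eq_pow_mul, update_eq_self]
  simpa [L] using congr($key p)

end PartialDerivatives

section MatrixPowers

variable {n δ : ℕ} {R S : Type*} [CommRing R] [CommRing S]

theorem map_matPow (f : R →+* S) (M : Fin n → Matrix (Fin δ) (Fin δ) R) (γ : Fin n → ℕ) :
    f.mapMatrix (matPow M γ) = matPow (fun j => f.mapMatrix (M j)) γ := by
  rw [matPow, matPow, map_list_prod, List.map_ofFn]
  simp only [Function.comp_def, map_pow]

theorem matPow_update_succ (M : Fin n → Matrix (Fin δ) (Fin δ) R)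
    (hM : ∀ j k, Commute (M j) (M k)) (β : Fin n → ℕ) (i : Fin n) :
    matPow M (update β i (β i + 1)) = M i * matPow M β := by
  have hf : (fun j => M j ^ update β i (β i + 1) j) =
      update (fun j => M j ^ β j) i (M i * M i ^ β i) := by
    rw [← pow_succ']
    exact funext fun j => apply_update (fun j e => M j ^ e) β i (β i + 1) j
  rw [matPow, hf, List.prod_ofFn_update_mul _ _ _ _ fun j => (hM i j).pow_right (β j),
    update_eq_self, matPow]

theorem Ideal.mapMatrix_mk_eq_zero_iff {ι : Type*} [Fintype ι] [DecidableEq ι] (I : Ideal R)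
    (A : Matrix ι ι R) : (Ideal.Quotient.mk I).mapMatrix A = 0 ↔ ∀ a b, A a b ∈ I := by
  simp [← Matrix.ext_iff, Ideal.Quotient.eq_zero_iff_mem]

theorem matPow_update_succ_sub_mul_mem (M : Fin n → Matrix (Fin δ) (Fin δ) R) (I : Ideal R)
    (hM : ∀ j k a b, (M j * M k - M k * M j) a b ∈ I) (β : Fin n → ℕ) (i : Fin n) (a b : Fin δ) :
    (matPow M (update β i (β i + 1)) - M i * matPow M β) a b ∈ I := by
  set π := (Ideal.Quotient.mk I).mapMatrix (m := Fin δ)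
  have hcomm : ∀ j k, Commute (π (M j)) (π (M k)) := fun j k => by
    rw [Commute, SemiconjBy, ← sub_eq_zero, ← map_mul, ← map_mul, ← map_sub]
    exact (I.mapMatrix_mk_eq_zero_iff _).mpr (hM j k)
  revert a b
  rw [← I.mapMatrix_mk_eq_zero_iff, map_sub, map_mul, map_matPow, map_matPow,
    matPow_update_succ _ hcomm, sub_self]

end MatrixPowers

theorem Finset.sum_Iic_eq_sum_Iic_update_succ {σ A : Type*} [Fintype σ] [DecidableEq σ]
    [AddCommMonoid A] (b : σ → ℕ) (i : σ) (F : (σ → ℕ) → A) (h0 : ∀ γ, γ i = 0 → F γ = 0)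
    (htop : ∀ β, β i = b i → F (update β i (β i + 1)) = 0) :
    ∑ γ ∈ Iic b, F γ = ∑ β ∈ Iic b, F (update β i (β i + 1)) := by
  symm
  have hle : ∀ γ ∈ Iic b, ∀ k ≤ b i, update γ i k ∈ Iic b := fun γ hγ k hk =>
    mem_Iic.mpr (update_le_iff.mpr ⟨hk, fun j _ => mem_Iic.mp hγ j⟩)
  refine Finset.sum_bij_ne_zero (fun β _ _ => update β i (β i + 1)) ?_ ?_ ?_ fun _ _ _ => rfl
  · intro β hβ hF
    exact hle β hβ _ (lt_of_le_of_ne (mem_Iic.mp hβ i) fun h => hF (htop β h))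
  · intro β _ _ β' _ _ h
    funext j
    have := congr_fun h j
    rcases eq_or_ne j i with rfl | hj
    · simpa using this
    · simpa [update_of_ne hj] using this
  · intro γ hγ hF
    have hi : γ i ≠ 0 := fun h => hF (h0 γ h)
    refine ⟨update γ i (γ i - 1), hle γ hγ _ ((Nat.sub_le _ _).trans (mem_Iic.mp hγ i)), ?_⟩
    have hγ' : update (update γ i (γ i - 1)) i (update γ i (γ i - 1) i + 1) = γ := by
      rw [update_self, update_idem, Nat.sub_add_cancel (Nat.one_le_iff_ne_zero.mpr hi),
        update_eq_self]
    exact ⟨by rwa [hγ'], hγ'⟩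

theorem prod_factorial_update_succ {σ : Type*} [Fintype σ] [DecidableEq σ] (β : σ → ℕ) (i : σ) :
    ∏ j, (update β i (β i + 1) j).factorial = (β i + 1) * ∏ j, (β j).factorial := by
  rw [Fintype.prod_eq_mul_prod_compl i, Fintype.prod_eq_mul_prod_compl i, update_self,
    Nat.factorial_succ, mul_assoc]
  congr 2
  exact Finset.prod_congr rfl fun j hj => by rw [update_of_ne (by simpa using hj)]

section TaylorSum

variable {n : ℕ} {K R ι : Type*} [Field K] [CommRing R] [Algebra K R]

/-- `p ↦ ∑_{γ ≤ d} (1/γ!) φ(∂^γ p) v_γ`; for `v_γ = M^γ[1]` this is the parametric normal form. -/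
noncomputable def taylorSum (d : ℕ) (φ : MvPolynomial (Fin n) K →ₐ[K] R)
    (v : (Fin n → ℕ) → ι → R) : MvPolynomial (Fin n) K →ₗ[K] ι → R :=
  ∑ γ ∈ Finset.Iic fun _ => d,
    (∏ j, ((γ j).factorial : K))⁻¹ • (φ.toLinearMap ∘ₗ pd γ).smulRight (v γ)

variable (d : ℕ) (φ : MvPolynomial (Fin n) K →ₐ[K] R) (v : (Fin n → ℕ) → ι → R)

theorem taylorSum_apply (p : MvPolynomial (Fin n) K) :
    taylorSum d φ v p =
      ∑ γ ∈ Finset.Iic fun _ => d, (∏ j, ((γ j).factorial : K))⁻¹ • φ (pd γ p) • v γ := by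
  simp [taylorSum]

theorem taylorSum_sub (w : (Fin n → ℕ) → ι → R) :
    taylorSum d φ (fun γ => v γ - w γ) = taylorSum d φ v - taylorSum d φ w := by
  refine LinearMap.ext fun p => ?_
  simp only [taylorSum_apply, LinearMap.sub_apply, ← Finset.sum_sub_distrib, smul_sub]

theorem mulVec_taylorSum [Fintype ι] (A : Matrix ι ι R) (p : MvPolynomial (Fin n) K) :
    A *ᵥ taylorSum d φ v p = taylorSum d φ (fun γ => A *ᵥ v γ) p := by
  simp only [taylorSum_apply, Matrix.mulVec_sum, Matrix.mulVec_smul]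

theorem taylorSum_apply_mem {I : Ideal R} (hv : ∀ γ a, v γ a ∈ I) (p : MvPolynomial (Fin n) K)
    (a : ι) : taylorSum d φ v p a ∈ I := by
  rw [taylorSum_apply, Finset.sum_apply]
  exact I.sum_mem fun γ _ => I.smul_of_tower_mem _ (I.mul_mem_left _ (hv γ a))

theorem taylorSum_X_mul [CharZero K] (i : Fin n)
    (hv : ∀ β : Fin n → ℕ, β i = d → v (update β i (β i + 1)) = 0) (p : MvPolynomial (Fin n) K) :
    taylorSum d φ v (X i * p) =
      φ (X i) • taylorSum d φ v p + taylorSum d φ (fun β => v (update β i (β i + 1))) p := by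
  simp only [taylorSum_apply, pd_X_mul, map_add, map_mul, map_nsmul, add_smul, smul_add,
    Finset.sum_add_distrib, Finset.smul_sum, mul_smul, smul_comm (φ (X i))]
  congr 1
  refine Finset.sum_Iic_eq_sum_Iic_update_succ _ i _ (fun γ h => by simp [h])
    (fun β h => by simp [hv β h]) |>.trans (Finset.sum_congr rfl fun β _ => ?_)
  have hcoef : (∏ j, ((update β i (β i + 1) j).factorial : K))⁻¹ * (β i + 1 : ℕ) =
      (∏ j, ((β j).factorial : K))⁻¹ := by
    rw [← Nat.cast_prod, ← Nat.cast_prod, prod_factorial_update_succ, Nat.cast_mul, mul_inv,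
      mul_right_comm, inv_mul_cancel₀ (Nat.cast_ne_zero.mpr (Nat.succ_ne_zero _)), one_mul]
  rw [update_self, update_idem, Nat.add_sub_cancel, update_eq_self, smul_assoc,
    ← Nat.cast_smul_eq_nsmul K, smul_smul, hcoef]

end TaylorSum

theorem parametric_normal_form_mul_rule_general {n m δ : ℕ} (hδ : 0 < δ) {K : Type*} [Field K] [CharZero K]
    (M : Fin n → Matrix (Fin δ) (Fin δ) (MvPolynomial (Fin n ⊕ Fin m) K))
    (hnil : ∀ γ : Fin n → ℕ, δ ≤ ∑ i, γ i → matPow M γ = 0)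
    (Nf : MvPolynomial (Fin n) K → Fin δ → MvPolynomial (Fin n ⊕ Fin m) K)
    (hNf : ∀ p a, Nf p a =
      ∑ γ ∈ Finset.Iic (fun _ : Fin n => δ),
        ((∏ i, ((γ i).factorial : K))⁻¹ •
          (MvPolynomial.rename Sum.inl (pd γ p) * matPow M γ a ⟨0, hδ⟩)))
    (C : Ideal (MvPolynomial (Fin n ⊕ Fin m) K))
    (hC : C = Ideal.span {r | ∃ i j a b, r = (M i * M j - M j * M i) a b})
    (i : Fin n) :
    ∃ O : MvPolynomial (Fin n) K →ₗ[K] (Fin δ → MvPolynomial (Fin n ⊕ Fin m) K),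
      (∀ p a, O p a ∈ C) ∧
      (∀ p a, Nf (X i * p) a =
        X (Sum.inl i) * Nf p a + ((M i).mulVec (Nf p)) a + O p a) := by
  set e : Fin δ → MvPolynomial (Fin n ⊕ Fin m) K := Pi.single ⟨0, hδ⟩ 1
  have hN : Nf = taylorSum δ (rename Sum.inl) fun γ => matPow M γ *ᵥ e := by
    ext p a
    simp [hNf, taylorSum_apply, e]
  have hM : ∀ j k a b, (M j * M k - M k * M j) a b ∈ C := fun j k a b =>
    hC ▸ Ideal.subset_span ⟨j, k, a, b, rfl⟩
  refine ⟨taylorSum δ (rename Sum.inl) fun β =>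
      (matPow M (update β i (β i + 1)) - M i * matPow M β) *ᵥ e,
    taylorSum_apply_mem _ _ _ fun β a => ?_, fun p a => ?_⟩
  · simpa [e, Matrix.mulVec_single_one] using matPow_update_succ_sub_mul_mem M C hM β i a _
  have hvanish : ∀ β : Fin n → ℕ, β i = δ → matPow M (update β i (β i + 1)) *ᵥ e = 0 :=
    fun β hβ => by
      rw [hnil _ ?_, Matrix.zero_mulVec]
      calc δ ≤ update β i (β i + 1) i := by simp [hβ]
        _ ≤ ∑ j, update β i (β i + 1) j :=
          Finset.single_le_sum (fun j _ => Nat.zero_le _) (Finset.mem_univ i)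
  rw [hN, taylorSum_X_mul δ _ _ i hvanish, mulVec_taylorSum]
  simp only [Matrix.sub_mulVec, ← Matrix.mulVec_mulVec, taylorSum_sub, LinearMap.sub_apply,
    Pi.add_apply, Pi.sub_apply, Pi.smul_apply, smul_eq_mul, rename_X]
  ring

/-- Product rule for the parametric normal form
`N_{z,μ}(p) = Σ_γ (1/γ!)∂^γ_z(p)·M(μ)^γ[1]`:
`N_{z,μ}(x_i·p) = x_i·N_{z,μ}(p) + M_i(μ)·N_{z,μ}(p) + O_{i,μ}(p)` where `O_{i,μ}` is
`K`-linear with values in the commutator ideal `C` generated by the entries of the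
pairwise commutators `M_iM_j − M_jM_i`.
(The ring is `K[z,μ] = MvPolynomial (Fin n ⊕ Fin m) K` with `z`-variables `X (inl i)`
and `μ`-variables `X (inr j)`; the matrices have entries `0`, `1`, or `μ` variables,
i.e. are supported on the `μ`-variables, and `M^γ = 0` for `|γ| ≥ δ`.) -/
theorem parametric_normal_form_mul_rule {n m δ : ℕ} (hδ : 0 < δ) {K : Type*} [Field K] [CharZero K]
    (M : Fin n → Matrix (Fin δ) (Fin δ) (MvPolynomial (Fin n ⊕ Fin m) K))
    (hsupp : ∀ i a b, M i a b ∈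
      MvPolynomial.supported K (Set.range (Sum.inr : Fin m → Fin n ⊕ Fin m)))
    (hnil : ∀ γ : Fin n → ℕ, δ ≤ ∑ i, γ i → matPow M γ = 0)
    (Nf : MvPolynomial (Fin n) K → Fin δ → MvPolynomial (Fin n ⊕ Fin m) K)
    (hNf : ∀ p a, Nf p a =
      ∑ γ ∈ Finset.Iic (fun _ : Fin n => δ),
        ((∏ i, ((γ i).factorial : K))⁻¹ •
          (MvPolynomial.rename Sum.inl (pd γ p) * matPow M γ a ⟨0, hδ⟩)))
    (C : Ideal (MvPolynomial (Fin n ⊕ Fin m) K))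
    (hC : C = Ideal.span {r | ∃ i j a b, r = (M i * M j - M j * M i) a b})
    (i : Fin n) :
    ∃ O : MvPolynomial (Fin n) K →ₗ[K] (Fin δ → MvPolynomial (Fin n ⊕ Fin m) K),
      (∀ p a, O p a ∈ C) ∧
      (∀ p a, Nf (X i * p) a =
        X (Sum.inl i) * Nf p a + ((M i).mulVec (Nf p)) a + O p a) :=
  parametric_normal_form_mul_rule_general hδ M hnil Nf hNf C hC i
end
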